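/- arXiv:2203.01428 — 8 statements merged into one kernel-verified Lean document; each statement's English description precedes it below -/
import Mathlib

section
/- Let unit vectors u_1,...,u_k in R^n and positive reals c_1,...,c_k satisfy ∑_{i=1}^k c_i u_i⊗u_i = I_n, and let L be a proper nonzero linear subspace of R^n. Then ∑_{i : u_i ∈ L} c_i ≤ dim L, with equality if and only if every u_i lies in L ∪ L^⊥. -/
open scoped BigOperators RealInnerProductSpace

/-! Projecting the decomposition `∑ cᵢ uᵢ ⊗ uᵢ = I` onto `L` and taking traces gives
`∑ cᵢ ‖P_L uᵢ‖² = dim L`. For a unit vector, `‖P_L uᵢ‖² = 1` when `uᵢ ∈ L` and `‖P_L uᵢ‖² ≥ 0`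
otherwise, with equality exactly when `uᵢ ∈ Lᗮ`; comparing the two sums termwise gives the
inequality and its equality case. -/

/-- The rank-one map `x ↦ ⟪u, x⟫ • u`, i.e. `u ⊗ u` for a unit vector `u`. -/
noncomputable def rankOne {n : ℕ} (u : EuclideanSpace ℝ (Fin n)) :
    EuclideanSpace ℝ (Fin n) →ₗ[ℝ] EuclideanSpace ℝ (Fin n) :=
  (innerSL ℝ u).toLinearMap.smulRight u

namespace Submodule

variable {E : Type*} [NormedAddCommGroup E] [InnerProductSpace ℝ E]
  (K : Submodule ℝ E) [K.HasOrthogonalProjection]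

theorem norm_orthogonalProjectionOnto_sq_eq_sum_sq_inner {ι : Type*} [Fintype ι]
    (b : OrthonormalBasis ι ℝ K) (x : E) :
    ‖K.orthogonalProjectionOnto x‖ ^ 2 = ∑ j, ⟪x, (b j : E)⟫ ^ 2 := by
  rw [← b.sum_sq_inner_left]
  simp

variable {K}

theorem norm_orthogonalProjectionOnto_of_mem {x : E} (hx : x ∈ K) :
    ‖K.orthogonalProjectionOnto x‖ = ‖x‖ := by
  simpa using congrArg norm (K.orthogonalProjectionOnto_mem_subspace_eq_self ⟨x, hx⟩)

theorem ite_mem_le_mul_norm_orthogonalProjectionOnto_sq [DecidablePred (· ∈ K)] {u : E}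
    (hu : ‖u‖ = 1) {c : ℝ} (hc : 0 ≤ c) :
    (if u ∈ K then c else 0) ≤ c * ‖K.orthogonalProjectionOnto u‖ ^ 2 := by
  split_ifs with h
  · simp [norm_orthogonalProjectionOnto_of_mem h, hu]
  · positivity

theorem ite_mem_eq_mul_norm_orthogonalProjectionOnto_sq_iff [DecidablePred (· ∈ K)] {u : E}
    (hu : ‖u‖ = 1) {c : ℝ} (hc : 0 < c) :
    (if u ∈ K then c else 0) = c * ‖K.orthogonalProjectionOnto u‖ ^ 2 ↔ u ∈ K ∨ u ∈ Kᗮ := by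
  split_ifs with h
  · simp [norm_orthogonalProjectionOnto_of_mem h, hu, h]
  · simp [h, hc.ne', K.starProjection_apply_eq_zero_iff]

end Submodule

section Frame

variable {n k : ℕ} {u : Fin k → EuclideanSpace ℝ (Fin n)} {c : Fin k → ℝ}

theorem sum_mul_inner_sq_eq_norm_sq_of_sum_smul_rankOne_eq_id
    (hBL : ∑ i, c i • rankOne (u i) = LinearMap.id) (x : EuclideanSpace ℝ (Fin n)) :
    ∑ i, c i * ⟪u i, x⟫ ^ 2 = ‖x‖ ^ 2 := by
  have := congrArg (fun T => ⟪x, T x⟫) hBL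
  simp only [LinearMap.sum_apply, inner_sum, LinearMap.id_apply,
    real_inner_self_eq_norm_sq] at this
  rw [← this]
  refine Finset.sum_congr rfl fun i _ => ?_
  simp [rankOne, inner_smul_right, real_inner_comm x, sq]

theorem sum_mul_norm_orthogonalProjectionOnto_sq_eq_finrank
    (hBL : ∑ i, c i • rankOne (u i) = LinearMap.id) (L : Submodule ℝ (EuclideanSpace ℝ (Fin n))) :
    ∑ i, c i * ‖L.orthogonalProjectionOnto (u i)‖ ^ 2 = Module.finrank ℝ L := by
  let b := stdOrthonormalBasis ℝ L
  calc ∑ i, c i * ‖L.orthogonalProjectionOnto (u i)‖ ^ 2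
      = ∑ j, ∑ i, c i * ⟪u i, (b j : EuclideanSpace ℝ (Fin n))⟫ ^ 2 := by
        simp_rw [L.norm_orthogonalProjectionOnto_sq_eq_sum_sq_inner b, Finset.mul_sum]
        exact Finset.sum_comm
    _ = Module.finrank ℝ L := by
        simp [sum_mul_inner_sq_eq_norm_sq_of_sum_smul_rankOne_eq_id hBL, Submodule.norm_coe,
          b.orthonormal.1]

end Frame

open Classical in
theorem stmt4_general {n k : ℕ} (u : Fin k → EuclideanSpace ℝ (Fin n)) (c : Fin k → ℝ)
    (hu : ∀ i, ‖u i‖ = 1) (hc : ∀ i, 0 < c i)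
    (hBL : ∑ i, c i • rankOne (u i) = LinearMap.id)
    (L : Submodule ℝ (EuclideanSpace ℝ (Fin n))) :
    (∑ i, if u i ∈ L then c i else 0) ≤ (Module.finrank ℝ L : ℝ) ∧
      ((∑ i, if u i ∈ L then c i else 0) = (Module.finrank ℝ L : ℝ) ↔
        ∀ i, u i ∈ L ∨ u i ∈ Lᗮ) := by
  have hle : ∀ i ∈ Finset.univ, (if u i ∈ L then c i else 0)
      ≤ c i * ‖L.orthogonalProjectionOnto (u i)‖ ^ 2 := fun i _ =>
    Submodule.ite_mem_le_mul_norm_orthogonalProjectionOnto_sq (hu i) (hc i).le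
  rw [← sum_mul_norm_orthogonalProjectionOnto_sq_eq_finrank hBL L,
    Finset.sum_eq_sum_iff_of_le hle]
  refine ⟨Finset.sum_le_sum hle, ?_⟩
  simp only [Finset.mem_univ, forall_const,
    Submodule.ite_mem_eq_mul_norm_orthogonalProjectionOnto_sq_iff (hu _) (hc _)]

open Classical in
theorem stmt4 {n k : ℕ} (u : Fin k → EuclideanSpace ℝ (Fin n)) (c : Fin k → ℝ)
    (hu : ∀ i, ‖u i‖ = 1) (hc : ∀ i, 0 < c i)
    (hBL : ∑ i, c i • rankOne (u i) = LinearMap.id)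
    (L : Submodule ℝ (EuclideanSpace ℝ (Fin n))) (hL0 : L ≠ ⊥) (hLtop : L ≠ ⊤) :
    (∑ i, if u i ∈ L then c i else 0) ≤ (Module.finrank ℝ L : ℝ) ∧
      ((∑ i, if u i ∈ L then c i else 0) = (Module.finrank ℝ L : ℝ) ↔
        ∀ i, u i ∈ L ∨ u i ∈ Lᗮ) :=
  stmt4_general u c hu hc hBL L
end

section
/- Let v_1,...,v_k be nonzero vectors spanning R^n. Define v_i ⋈ v_j if either v_i = v_j or some minimal dependent subset of {v_1,...,v_k} contains both v_i and v_j. Then ⋈ is an equivalence relation on {v_1,...,v_k}, and the linear hulls V_1,...,V_m of the equivalence classes span R^n with V_i ∩ V_j = {0} for i ≠ j. -/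
open scoped BigOperators

/-- The index set `S` carries a linearly dependent family of vectors. -/
def DepSet {n k : ℕ} (v : Fin k → EuclideanSpace ℝ (Fin n)) (S : Finset (Fin k)) : Prop :=
  ¬ LinearIndependent ℝ (fun i : S => v i)

/-- `S` is minimally dependent: dependent, but every proper subset is independent. -/
def MinDep {n k : ℕ} (v : Fin k → EuclideanSpace ℝ (Fin n)) (S : Finset (Fin k)) : Prop :=
  DepSet v S ∧ ∀ T ⊂ S, ¬ DepSet v T

/-- The relation `v i ⋈ v j`. -/
def Bowtie {n k : ℕ} (v : Fin k → EuclideanSpace ℝ (Fin n)) (i j : Fin k) : Prop :=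
  v i = v j ∨ ∃ D : Finset (Fin k), MinDep v D ∧ i ∈ D ∧ j ∈ D

/-
Minimally dependent sets are the circuits of the linear matroid of `v`, and for `i ≠ j`
the equality `v i = v j` of nonzero vectors makes `{i, j}` a circuit, so `⋈` is the relation
"`i` and `j` lie on a common circuit". Its transitivity is the classical consequence of strong
circuit elimination, by induction on `|C₁ ∪ C₂|`.

For the direct sum, let `A` be a class and `B` a set disjoint from it, and choose independent
`I ⊆ A`, `J ⊆ B` with the same spans. A nonzero vector in both spans makes `I ∪ J` dependent,
so `I ∪ J` contains a circuit; as a class contains every circuit it meets, that circuit lies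
in `I` or in `J`, contradicting their independence.
-/

open Set Submodule

section LinearMatroid

variable {ι K V : Type*} [DivisionRing K] [AddCommGroup V] [Module K V] {v : ι → V}

lemma exists_linearIndepOn_subset_span_eq (v : ι → V) (A : Set ι) :
    ∃ I ⊆ A, LinearIndepOn K v I ∧ span K (v '' I) = span K (v '' A) := by
  obtain ⟨I, hIA, -, hAI, hI⟩ :=
    exists_linearIndepOn_extension (linearIndepOn_empty K v) (empty_subset A)
  exact ⟨I, hIA, hI, le_antisymm (span_mono (image_mono hIA)) (span_le.2 hAI)⟩

variable [Finite ι]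

lemma LinearIndepOn.ncard_le_of_image_subset_span {I J : Set ι}
    (hI : LinearIndepOn K v I) (hJ : LinearIndepOn K v J) (hJI : v '' J ⊆ span K (v '' I)) :
    J.ncard ≤ I.ncard := by
  have hJ' : LinearIndependent K fun x : v '' J ↦ (⟨x, hJI x.2⟩ : span K (v '' I)) :=
    .of_comp (span K (v '' I)).subtype hJ.id_image
  have h := hJ'.cardinal_le_rank.trans_eq (rank_span_set hI.id_image)
  rw [← hI.injOn.ncard_image, ← hJ.injOn.ncard_image, ← Nat.card_coe_set_eq,
    ← Nat.card_coe_set_eq]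
  exact Cardinal.toNat_le_toNat h (Cardinal.lt_aleph0_of_finite _)

lemma LinearIndepOn.exists_insert_of_ncard_lt {I J : Set ι}
    (hI : LinearIndepOn K v I) (hJ : LinearIndepOn K v J) (hIJ : I.ncard < J.ncard) :
    ∃ e ∈ J, e ∉ I ∧ LinearIndepOn K v (insert e I) := by
  by_contra! h
  refine hIJ.not_ge (hI.ncard_le_of_image_subset_span hJ ?_)
  rintro _ ⟨e, he, rfl⟩
  by_cases heI : e ∈ I
  · exact subset_span (mem_image_of_mem v heI)
  · by_contra hspan
    exact h e he heI (hI.insert hspan)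

variable (K) in
def linearMatroid (v : ι → V) : Matroid ι :=
  (IndepMatroid.ofFinite finite_univ (LinearIndepOn K v) (linearIndepOn_empty K v)
    (fun _ _ hJ hIJ ↦ hJ.mono hIJ) (fun _ _ hI hJ hIJ ↦ hI.exists_insert_of_ncard_lt hJ hIJ)
    (fun _ _ ↦ subset_univ _)).matroid

@[simp]
lemma linearMatroid_indep {I : Set ι} : (linearMatroid K v).Indep I ↔ LinearIndepOn K v I :=
  Iff.rfl

lemma linearMatroid_isCircuit_iff {C : Set ι} :
    (linearMatroid K v).IsCircuit C ↔
      ¬ LinearIndepOn K v C ∧ ∀ I ⊂ C, LinearIndepOn K v I := by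
  simp [Matroid.isCircuit_iff_forall_ssubset, Matroid.Dep, linearMatroid]

lemma linearMatroid_isCircuit_pair {i j : ι} (hij : i ≠ j) (hi : v i ≠ 0) (hvij : v i = v j) :
    (linearMatroid K v).IsCircuit {i, j} := by
  rw [Matroid.isCircuit_iff_dep_forall_sdiff_singleton_indep]
  refine ⟨⟨fun h ↦ ?_, subset_univ _⟩, ?_⟩
  · exact (linearIndepOn_pair_iff v hij hi).1 h 1 (by rw [one_smul, hvij])
  · rintro e (rfl | rfl)
    · simpa [pair_sdiff_left hij, linearIndepOn_singleton_iff, ← hvij] using hi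
    · simpa [pair_sdiff_right hij, linearIndepOn_singleton_iff] using hi

lemma disjoint_span_image_of_isCircuit {A B : Set ι} (hAB : Disjoint A B)
    (hA : ∀ C, (linearMatroid K v).IsCircuit C → (C ∩ A).Nonempty → C ⊆ A) :
    Disjoint (span K (v '' A)) (span K (v '' B)) := by
  obtain ⟨I, hIA, hI, hIspan⟩ := exists_linearIndepOn_subset_span_eq (K := K) v A
  obtain ⟨J, hJB, hJ, hJspan⟩ := exists_linearIndepOn_subset_span_eq (K := K) v B
  have hIJ : Disjoint I J := hAB.mono hIA hJB
  rw [← hIspan, ← hJspan]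
  by_contra hspan
  have hdep : (linearMatroid K v).Dep (I ∪ J) :=
    ⟨fun h ↦ hspan ((linearIndepOn_union_iff hIJ).1 h).2.2, subset_univ _⟩
  obtain ⟨C, hCIJ, hC⟩ := hdep.exists_isCircuit_subset
  by_cases hCA : (C ∩ A).Nonempty
  · refine hC.not_indep (hI.mono fun c hc ↦ (hCIJ hc).resolve_right fun hcJ ↦ ?_)
    exact hAB.notMem_of_mem_left (hA C hC hCA hc) (hJB hcJ)
  · refine hC.not_indep (hJ.mono fun c hc ↦ (hCIJ hc).resolve_left fun hcI ↦ hCA ?_)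
    exact ⟨c, hc, hIA hcI⟩

end LinearMatroid

namespace Matroid

variable {α : Type*} {M : Matroid α} {C C₁ C₂ : Set α} {x y z : α}

lemma IsCircuit.not_subset_of_notMem (hC₁ : M.IsCircuit C₁) (hC : M.IsCircuit C)
    (hy : y ∈ C₁) (hyC : y ∉ C) : ¬ C ⊆ C₁ :=
  fun h ↦ hC₁.not_ssubset hC ⟨h, fun hsub ↦ hyC (hsub hy)⟩

lemma IsCircuit.exists_isCircuit_mem_mem [M.Finitary] (hC₁ : M.IsCircuit C₁)
    (hC₂ : M.IsCircuit C₂) (hx : x ∈ C₁) (hy₁ : y ∈ C₁) (hy₂ : y ∈ C₂) (hz : z ∈ C₂) :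
    ∃ C, M.IsCircuit C ∧ x ∈ C ∧ z ∈ C := by
  induction h : (C₁ ∪ C₂).ncard using Nat.strong_induction_on generalizing C₂ y with
  | _ N ih =>
  by_cases hz₁ : z ∈ C₁
  · exact ⟨C₁, hC₁, hx, hz₁⟩
  by_cases hx₂ : x ∈ C₂
  · exact ⟨C₂, hC₂, hx₂, hz⟩
  obtain ⟨C₃, hC₃s, hC₃, hx₃⟩ := hC₁.strong_elimination hC₂ hy₁ hy₂ hx hx₂
  by_cases hz₃ : z ∈ C₃
  · exact ⟨C₃, hC₃, hx₃, hz₃⟩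
  obtain ⟨u, hu₃, hu₁⟩ :=
    not_subset.1 (hC₁.not_subset_of_notMem hC₃ hy₁ fun h ↦ (hC₃s h).2 rfl)
  have hu₂ : u ∈ C₂ := (hC₃s hu₃).1.resolve_left hu₁
  obtain ⟨C₄, hC₄s, hC₄, hz₄⟩ := hC₂.strong_elimination hC₃ hu₂ hu₃ hz hz₃
  obtain ⟨t, ht₄, ht₂⟩ :=
    not_subset.1 (hC₂.not_subset_of_notMem hC₄ hu₂ fun h ↦ (hC₄s h).2 rfl)
  have ht₁ : t ∈ C₁ := (hC₃s ((hC₄s ht₄).1.resolve_left ht₂)).1.resolve_right ht₂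
  -- the second elimination removes `u ∈ C₂ \ C₁`, so `C₁ ∪ C₄` is strictly smaller
  have hlt : (C₁ ∪ C₄).ncard < N := by
    rw [← h]
    refine ncard_lt_ncard ?_ (hC₁.finite.union hC₂.finite)
    refine ssubset_of_subset_not_subset (union_subset subset_union_left fun a ha ↦ ?_)
      fun hsub ↦ ?_
    · obtain ⟨ha₂ | ha₃, -⟩ := hC₄s ha
      · exact Or.inr ha₂
      · exact (hC₃s ha₃).1
    · obtain hu | hu := hsub (Or.inr hu₂)
      · exact hu₁ hu
      · exact (hC₄s hu).2 rfl
  exact ih _ hlt hC₄ ht₁ ht₄ hz₄ rfl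

end Matroid

section Bowtie

variable {n k : ℕ} {v : Fin k → EuclideanSpace ℝ (Fin n)}

lemma minDep_iff_isCircuit {S : Finset (Fin k)} :
    MinDep v S ↔ (linearMatroid ℝ v).IsCircuit S := by
  rw [linearMatroid_isCircuit_iff]
  refine and_congr Iff.rfl ⟨fun h I hI ↦ ?_, fun h T hT ↦ not_not.2 (h T (by simpa using hT))⟩
  obtain ⟨T, rfl⟩ := I.toFinite.exists_finset_coe
  exact not_not.1 (h T (by simpa using hI))

lemma bowtie_of_isCircuit {C : Set (Fin k)} (hC : (linearMatroid ℝ v).IsCircuit C) {i j : Fin k}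
    (hi : i ∈ C) (hj : j ∈ C) : Bowtie v i j := by
  obtain ⟨D, rfl⟩ := C.toFinite.exists_finset_coe
  exact .inr ⟨D, minDep_iff_isCircuit.2 hC, hi, hj⟩

lemma bowtie_iff_exists_isCircuit (hv : ∀ i, v i ≠ 0) {i j : Fin k} :
    Bowtie v i j ↔ i = j ∨ ∃ C, (linearMatroid ℝ v).IsCircuit C ∧ i ∈ C ∧ j ∈ C := by
  refine ⟨?_, ?_⟩
  · rintro (hvij | ⟨D, hD, hi, hj⟩)
    · obtain rfl | hij := eq_or_ne i j
      · exact .inl rfl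
      · exact .inr ⟨{i, j}, linearMatroid_isCircuit_pair hij (hv i) hvij, by simp, by simp⟩
    · exact .inr ⟨D, minDep_iff_isCircuit.1 hD, hi, hj⟩
  · rintro (rfl | ⟨C, hC, hi, hj⟩)
    · exact .inl rfl
    · exact bowtie_of_isCircuit hC hi hj

lemma bowtie_equivalence (hv : ∀ i, v i ≠ 0) : Equivalence (Bowtie v) where
  refl _ := .inl rfl
  symm
    | .inl h => .inl h.symm
    | .inr ⟨D, hD, hi, hj⟩ => .inr ⟨D, hD, hj, hi⟩
  trans hij hjl := by
    rw [bowtie_iff_exists_isCircuit hv] at hij hjl ⊢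
    obtain rfl | ⟨C₁, hC₁, hi, hj₁⟩ := hij
    · exact hjl
    obtain rfl | ⟨C₂, hC₂, hj₂, hl⟩ := hjl
    · exact .inr ⟨C₁, hC₁, hi, hj₁⟩
    exact .inr (hC₁.exists_isCircuit_mem_mem hC₂ hi hj₁ hj₂ hl)

end Bowtie

theorem stmt6 {n k : ℕ} (v : Fin k → EuclideanSpace ℝ (Fin n))
    (hv : ∀ i, v i ≠ 0) (hspan : Submodule.span ℝ (Set.range v) = ⊤) :
    Equivalence (Bowtie v) ∧
    (⨆ i : Fin k, Submodule.span ℝ (v '' {j | Bowtie v i j})) = ⊤ ∧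
    (∀ i j : Fin k, ¬ Bowtie v i j →
      Submodule.span ℝ (v '' {a | Bowtie v i a}) ⊓
        Submodule.span ℝ (v '' {a | Bowtie v j a}) = ⊥) := by
  have hequiv := bowtie_equivalence hv
  refine ⟨hequiv, ?_, fun i j hij ↦ ?_⟩
  · rw [eq_top_iff, ← hspan, span_le]
    rintro _ ⟨i, rfl⟩
    exact le_iSup (fun i ↦ span ℝ (v '' {j | Bowtie v i j})) i
      (subset_span ⟨i, hequiv.refl i, rfl⟩)
  · refine disjoint_iff.1 (disjoint_span_image_of_isCircuit ?_ fun C hC ⟨a, haC, ha⟩ b hb ↦ ?_)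
    · exact disjoint_left.2 fun a hia hja ↦ hij (hequiv.trans hia (hequiv.symm hja))
    · exact hequiv.trans ha (bowtie_of_isCircuit hC haC hb)
end

section
/- (Ball–Barthe lemma) Let unit vectors u_1,...,u_k in R^n and positive reals c_1,...,c_k satisfy ∑_{i=1}^k c_i u_i⊗u_i = I_n. Then for all positive reals t_1,...,t_k, det(∑_{i=1}^k c_i t_i u_i⊗u_i) ≥ ∏_{i=1}^k t_i^{c_i}. -/
/-!
By Cauchy–Binet, `det (∑ i, c i t i • u i ⊗ u i)` is a polynomial `∑_S λ_S ∏_{i ∈ S} t i` over the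
`n`-element sets `S` of indices, with nonnegative coefficients `λ_S = (∏_{i ∈ S} c i) det (u_S)²`.
Taking all `t i = 1` gives `∑_S λ_S = 1`. Doubling a single `t i` turns the matrix into
`I + c i • u i ⊗ u i`, of determinant `1 + c i`, so `∑_{S ∋ i} λ_S = c i`. Weighted AM–GM then gives
`∑_S λ_S ∏_{i ∈ S} t i ≥ ∏_S (∏_{i ∈ S} t i) ^ λ_S = ∏_i t i ^ c i`.
-/

open scoped BigOperators

open Finset Matrix Equiv

namespace Matrix

variable {ι κ R : Type*} [Fintype ι] [DecidableEq ι] [CommRing R]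

theorem det_mul_eq_sum_prod_mul_det_submatrix [Fintype κ] (A : Matrix ι κ R)
    (B : Matrix κ ι R) :
    det (A * B) = ∑ f : ι → κ, (∏ i, A i (f i)) * det (B.submatrix f id) := by
  have hrows : A * B = of fun i => ∑ j, A i j • B j := by
    ext i l
    simp [mul_apply, Finset.sum_apply]
  rw [hrows]
  change detRowAlternating.toMultilinearMap (fun i => ∑ j, A i j • B j) = _
  rw [MultilinearMap.map_sum]
  refine sum_congr rfl fun f _ => ?_
  rw [MultilinearMap.map_smul_univ]
  rfl

theorem injective_of_det_submatrix_ne_zero {B : Matrix κ ι R} {f : ι → κ}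
    (h : det (B.submatrix f id) ≠ 0) : Function.Injective f := by
  intro a b hab
  by_contra hne
  exact h (det_zero_of_row_eq hne (by ext; simp [hab]))

/-- The Cauchy–Binet formula, summed over all maps `ι → κ` instead of the increasing ones:
each injective map is reached from `card ι !` maps `f ∘ σ`, all with the same summand. -/
theorem factorial_card_mul_det_mul [Fintype κ] (A : Matrix ι κ R) (B : Matrix κ ι R) :
    ((Fintype.card ι).factorial : R) * det (A * B) =
      ∑ f : ι → κ, det (A.submatrix id f) * det (B.submatrix f id) := by
  set T : (ι → κ) → R := fun f => (∏ i, A i (f i)) * det (B.submatrix f id)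
  have hterm : ∀ f : ι → κ, det (A.submatrix id f) * det (B.submatrix f id) =
      ∑ σ : Perm ι, T (f ∘ σ) := by
    intro f
    rw [← det_transpose, det_apply', sum_mul]
    refine sum_congr rfl fun σ _ => ?_
    have hB : det (B.submatrix (f ∘ σ) id) = Perm.sign σ * det (B.submatrix f id) :=
      det_permute σ (B.submatrix f id)
    simp only [T, hB, transpose_apply, submatrix_apply, id, Function.comp_apply]
    ring
  have hreindex : ∀ σ : Perm ι, ∑ f : ι → κ, T (f ∘ σ) = det (A * B) := fun σ => by
    rw [det_mul_eq_sum_prod_mul_det_submatrix]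
    exact Fintype.sum_equiv (arrowCongr σ.symm (Equiv.refl κ)) _ _ fun f => rfl
  simp_rw [hterm]
  rw [sum_comm, sum_congr rfl fun σ _ => hreindex σ, sum_const, card_univ, Fintype.card_perm,
    nsmul_eq_mul]

end Matrix

theorem Fintype.prod_comp_eq_prod_pow_card_fiber {α β M : Type*} [Fintype α] [Fintype β]
    [DecidableEq β] [CommMonoid M] (f : α → β) (g : β → M) :
    ∏ a, g (f a) = ∏ b, g b ^ Fintype.card {a // f a = b} := by
  rw [← Fintype.prod_fiberwise' f g]
  simp

theorem Real.prod_rpow_sum_mul_le_sum_mul_prod_pow {ι κ : Type*} [Fintype ι] [Fintype κ]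
    (w : ι → ℝ) (hw : ∀ j, 0 ≤ w j) (hw1 : ∑ j, w j = 1) (m : ι → κ → ℕ) (t : κ → ℝ)
    (ht : ∀ i, 0 < t i) :
    ∏ i, t i ^ (∑ j, w j * m j i) ≤ ∑ j, w j * ∏ i, t i ^ m j i := by
  calc ∏ i, t i ^ (∑ j, w j * m j i)
      = ∏ j, (∏ i, t i ^ m j i) ^ w j := by
        simp_rw [Real.rpow_sum_of_pos (ht _)]
        rw [prod_comm]
        refine prod_congr rfl fun j _ => ?_
        rw [← Real.finsetProd_rpow _ _ fun i _ => pow_nonneg (ht i).le _]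
        refine prod_congr rfl fun i _ => ?_
        rw [← Real.rpow_natCast, ← Real.rpow_mul (ht i).le, mul_comm]
    _ ≤ ∑ j, w j * ∏ i, t i ^ m j i :=
        Real.geom_mean_le_arith_mean_weighted _ _ _ (fun j _ => hw j) hw1
          fun j _ => prod_nonneg fun i _ => pow_nonneg (ht i).le _

section RankOne

variable {n k : ℕ}

theorem rankOne_eq_toEuclideanLin (u : EuclideanSpace ℝ (Fin n)) :
    rankOne u = toEuclideanLin (vecMulVec u u) := by
  have h := InnerProductSpace.symm_toEuclideanLin_rankOne (𝕜 := ℝ) u u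
  rw [star_trivial, LinearEquiv.symm_apply_eq] at h
  rw [← h]
  rfl

theorem det_id_add_smul_rankOne {u : EuclideanSpace ℝ (Fin n)} (hu : ‖u‖ = 1) (c : ℝ) :
    LinearMap.det (LinearMap.id + c • rankOne u) = 1 + c := by
  rw [rankOne_eq_toEuclideanLin, ← map_smul, ← toLpLin_one, ← map_add, LinearMap.det_toLpLin,
    vecMulVec_eq Unit, ← Matrix.smul_mul, ← replicateCol_smul,
    det_one_add_replicateCol_mul_replicateRow]
  have hunit : u ⬝ᵥ u = 1 := by
    have h := EuclideanSpace.inner_eq_star_dotProduct u u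
    rw [star_trivial, real_inner_self_eq_norm_sq, hu, one_pow] at h
    exact h.symm
  simp [dotProduct_smul, hunit]

theorem factorial_mul_det_sum_smul_rankOne (u : Fin k → EuclideanSpace ℝ (Fin n))
    (w : Fin k → ℝ) :
    (n.factorial : ℝ) * LinearMap.det (∑ i, w i • rankOne (u i)) =
      ∑ f : Fin n → Fin k, (∏ a, w (f a)) * det (of fun a b => u (f a) b) ^ 2 := by
  set U : Matrix (Fin k) (Fin n) ℝ := of fun i b => u i b
  have hsum : ∑ i, w i • rankOne (u i) = toEuclideanLin (Uᵀ * (diagonal w * U)) := by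
    simp_rw [rankOne_eq_toEuclideanLin, ← map_smul, ← map_sum]
    congr 1
    ext a b
    rw [mul_apply]
    simp only [U, Matrix.sum_apply, Matrix.smul_apply, vecMulVec_apply, diagonal_mul,
      transpose_apply, of_apply, smul_eq_mul]
    exact sum_congr rfl fun i _ => by ring
  have hCB := factorial_card_mul_det_mul Uᵀ (diagonal w * U)
  rw [Fintype.card_fin] at hCB
  rw [hsum, LinearMap.det_toLpLin, hCB]
  refine sum_congr rfl fun f _ => ?_
  have hcols : Uᵀ.submatrix id f = (of fun a b => u (f a) b)ᵀ := rfl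
  have hrows : (diagonal w * U).submatrix f id =
      diagonal (fun a => w (f a)) * of fun a b => u (f a) b := by
    ext a b
    simp [U, diagonal_mul]
  rw [hcols, hrows, det_transpose, det_mul, det_diagonal]
  ring

/-- The coefficient `λ_S = (∏_{i ∈ S} c i) det (u_S)²`, spread evenly over the `n!` enumerations
`f` of `S`; maps `f` that are not injective get weight `0`. -/
noncomputable def cauchyBinetWeight (u : Fin k → EuclideanSpace ℝ (Fin n)) (c : Fin k → ℝ)
    (f : Fin n → Fin k) : ℝ :=
  (∏ a, c (f a)) * det (of fun a b => u (f a) b) ^ 2 / n.factorial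

theorem cauchyBinetWeight_nonneg (u : Fin k → EuclideanSpace ℝ (Fin n)) {c : Fin k → ℝ}
    (hc : ∀ i, 0 ≤ c i) (f : Fin n → Fin k) : 0 ≤ cauchyBinetWeight u c f :=
  div_nonneg (mul_nonneg (prod_nonneg fun _ _ => hc _) (sq_nonneg _)) (Nat.cast_nonneg _)

theorem det_sum_mul_smul_rankOne (u : Fin k → EuclideanSpace ℝ (Fin n)) (c t : Fin k → ℝ) :
    LinearMap.det (∑ i, (c i * t i) • rankOne (u i)) =
      ∑ f : Fin n → Fin k, cauchyBinetWeight u c f * ∏ a, t (f a) := by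
  have h := factorial_mul_det_sum_smul_rankOne u (fun i => c i * t i)
  rw [mul_comm, ← eq_div_iff (by positivity), sum_div] at h
  rw [h]
  refine sum_congr rfl fun f _ => ?_
  rw [cauchyBinetWeight, prod_mul_distrib]
  ring

theorem sum_cauchyBinetWeight {u : Fin k → EuclideanSpace ℝ (Fin n)} {c : Fin k → ℝ}
    (hBL : ∑ i, c i • rankOne (u i) = LinearMap.id) :
    ∑ f : Fin n → Fin k, cauchyBinetWeight u c f = 1 := by
  have h := det_sum_mul_smul_rankOne u c 1
  simp only [Pi.one_apply, mul_one, prod_const_one, hBL, LinearMap.det_id] at h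
  exact h.symm

theorem sum_cauchyBinetWeight_mul_card_fiber {u : Fin k → EuclideanSpace ℝ (Fin n)}
    {c : Fin k → ℝ} (hu : ∀ i, ‖u i‖ = 1) (hBL : ∑ i, c i • rankOne (u i) = LinearMap.id)
    (i : Fin k) :
    ∑ f : Fin n → Fin k, cauchyBinetWeight u c f * Fintype.card {a // f a = i} = c i := by
  set t : Fin k → ℝ := fun j => if j = i then 2 else 1
  have hdoubled : ∑ j, (c j * t j) • rankOne (u j) = LinearMap.id + c i • rankOne (u i) := by
    have hsplit : ∀ j, (c j * t j) • rankOne (u j) =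
        c j • rankOne (u j) + if j = i then c j • rankOne (u j) else 0 := by
      intro j
      by_cases hj : j = i
      · simp only [t, hj, if_true, mul_two, add_smul]
      · simp [t, hj]
    rw [sum_congr rfl fun j _ => hsplit j, sum_add_distrib, hBL, sum_ite_eq']
    simp
  have hterm : ∀ f : Fin n → Fin k, cauchyBinetWeight u c f * ∏ a, t (f a) =
      cauchyBinetWeight u c f + cauchyBinetWeight u c f * Fintype.card {a // f a = i} := by
    intro f
    by_cases hD : det (of fun a b => u (f a) b) = 0
    · simp [cauchyBinetWeight, hD]
    have hinj : Function.Injective f :=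
      injective_of_det_submatrix_ne_zero (B := of fun j b => u j b) hD
    have hcard : Fintype.card {a // f a = i} ≤ 1 :=
      Fintype.card_le_one_iff_subsingleton.2 ⟨fun x y => Subtype.ext (hinj (x.2.trans y.2.symm))⟩
    have hpow : ∏ a, t (f a) = 2 ^ Fintype.card {a // f a = i} := by
      rw [Fintype.prod_comp_eq_prod_pow_card_fiber]
      simp [t, ite_pow]
    rw [hpow]
    interval_cases Fintype.card {a // f a = i} <;> ring
  have h := det_sum_mul_smul_rankOne u c t
  rw [hdoubled, det_id_add_smul_rankOne (hu i), sum_congr rfl fun f _ => hterm f,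
    sum_add_distrib, sum_cauchyBinetWeight hBL] at h
  linarith

end RankOne

theorem stmt7 {n k : ℕ} (u : Fin k → EuclideanSpace ℝ (Fin n)) (c : Fin k → ℝ)
    (hu : ∀ i, ‖u i‖ = 1) (hc : ∀ i, 0 < c i)
    (hBL : ∑ i, c i • rankOne (u i) = LinearMap.id)
    (t : Fin k → ℝ) (ht : ∀ i, 0 < t i) :
    ∏ i, t i ^ c i ≤ LinearMap.det (∑ i, (c i * t i) • rankOne (u i)) := by
  calc ∏ i, t i ^ c i
      = ∏ i, t i ^ (∑ f, cauchyBinetWeight u c f * Fintype.card {a // f a = i}) := by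
        simp_rw [sum_cauchyBinetWeight_mul_card_fiber hu hBL]
    _ ≤ ∑ f, cauchyBinetWeight u c f * ∏ i, t i ^ Fintype.card {a // f a = i} :=
        Real.prod_rpow_sum_mul_le_sum_mul_prod_pow _
          (cauchyBinetWeight_nonneg u fun i => (hc i).le) (sum_cauchyBinetWeight hBL) _ t ht
    _ = LinearMap.det (∑ i, (c i * t i) • rankOne (u i)) := by
        simp_rw [det_sum_mul_smul_rankOne, Fintype.prod_comp_eq_prod_pow_card_fiber]
end

section
/- Let E_1,...,E_k be linear subspaces of R^n and c_1,...,c_k > 0 with ∑_{i=1}^k c_i P_{E_i} = I_n. Then for every proper linear subspace V of R^n, ∑_{i=1}^k c_i dim(E_i ∩ V) ≤ dim V, with equality if and only if E_i = (E_i ∩ V) + (E_i ∩ V^⊥) for all i. -/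
/-!
For any orthonormal basis `(b j)` and subspace `W`, `∑ j, ‖P_W (b j)‖² = tr P_W = dim W`.
Applying `‖x‖² = ∑ i, c i ‖P_{E i} x‖²`, which follows from `∑ i, c i P_{E i} = 1`, to the vectors
`x = P_V (b j)` gives `dim V = ∑ i, c i ∑ j, ‖P_{E i} P_V (b j)‖²`. Since
`P_{E i ⊓ V} = P_{E i ⊓ V} P_{E i} P_V` and projections are contractions, each inner sum is at
least `dim (E i ⊓ V)`, with equality iff `P_{E i} P_V (b j) ∈ V` for all `j`, i.e. iff `V` is
invariant under `P_{E i}`. As `P_{E i}` is self-adjoint, `Vᗮ` is then invariant too, which is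
exactly the splitting `E i = (E i ⊓ V) ⊔ (E i ⊓ Vᗮ)`.
-/

open scoped RealInnerProductSpace InnerProductSpace
open Module Submodule

namespace Submodule

variable {𝕜 H : Type*} [RCLike 𝕜] [NormedAddCommGroup H] [InnerProductSpace 𝕜 H]

theorem norm_starProjection_apply_eq_iff (K : Submodule 𝕜 H) [K.HasOrthogonalProjection]
    {v : H} : ‖K.starProjection v‖ = ‖v‖ ↔ v ∈ K := by
  refine ⟨fun h => ?_, norm_starProjection_apply K⟩
  have hpyth := K.norm_sq_eq_add_norm_sq_starProjection v
  rw [h] at hpyth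
  rw [← K.orthogonal_orthogonal, ← starProjection_apply_eq_zero_iff, ← norm_eq_zero]
  exact (pow_eq_zero_iff two_ne_zero).mp (by linarith)

theorem mem_invtSubmodule_starProjection_iff (K V : Submodule 𝕜 H) [K.HasOrthogonalProjection]
    [V.HasOrthogonalProjection] :
    V ∈ End.invtSubmodule (K.starProjection : H →ₗ[𝕜] H) ↔ K = K ⊓ V ⊔ K ⊓ Vᗮ := by
  simp only [End.mem_invtSubmodule_iff_forall_mem_of_mem, ContinuousLinearMap.coe_coe]
  constructor
  · intro hV
    have hVperp : ∀ w ∈ Vᗮ, K.starProjection w ∈ Vᗮ :=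
      K.starProjection_isSymmetric.orthogonalComplement_mem_invtSubmodule hV
    refine le_antisymm (fun x hx => ?_) (sup_le inf_le_left inf_le_left)
    rw [← K.starProjection_eq_self_iff.mpr hx, ← V.starProjection_add_starProjection_orthogonal x,
      map_add]
    exact add_mem_sup ⟨K.starProjection_apply_mem _, hV _ (V.starProjection_apply_mem x)⟩
      ⟨K.starProjection_apply_mem _, hVperp _ (Vᗮ.starProjection_apply_mem x)⟩
  · intro hsplit v hv
    obtain ⟨a, ha, b, hb, hab⟩ := mem_sup.mp (hsplit.le (K.starProjection_apply_mem v))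
    have hPb : ⟪K.starProjection v, b⟫_𝕜 = 0 := by
      rw [inner_starProjection_left_eq_right, K.starProjection_eq_self_iff.mpr hb.1]
      exact inner_right_of_mem_orthogonal hv hb.2
    have hb0 : b = 0 := by
      rw [← hab, inner_add_left, inner_right_of_mem_orthogonal ha.2 hb.2, zero_add] at hPb
      exact inner_self_eq_zero.mp hPb
    rw [← hab, hb0, add_zero]
    exact ha.2

theorem starProjection_inf_starProjection_starProjection (K V : Submodule 𝕜 H)
    [K.HasOrthogonalProjection] [V.HasOrthogonalProjection] [(K ⊓ V).HasOrthogonalProjection]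
    (x : H) :
    (K ⊓ V).starProjection (K.starProjection (V.starProjection x)) = (K ⊓ V).starProjection x := by
  rw [← ContinuousLinearMap.comp_apply, starProjection_comp_starProjection_of_le inf_le_left,
    ← ContinuousLinearMap.comp_apply, starProjection_comp_starProjection_of_le inf_le_right]

theorem norm_starProjection_inf_apply_le (K V : Submodule 𝕜 H) [K.HasOrthogonalProjection]
    [V.HasOrthogonalProjection] [(K ⊓ V).HasOrthogonalProjection] (x : H) :
    ‖(K ⊓ V).starProjection x‖ ≤ ‖K.starProjection (V.starProjection x)‖ := by
  rw [← starProjection_inf_starProjection_starProjection]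
  exact norm_starProjection_apply_le _ _

theorem trace_starProjection [FiniteDimensional 𝕜 H] (K : Submodule 𝕜 H) :
    LinearMap.trace 𝕜 H K.starProjection = finrank 𝕜 K :=
  LinearMap.IsProj.trace (f := (K.starProjection : H →ₗ[𝕜] H))
    ⟨K.starProjection_apply_mem, fun _ => K.starProjection_eq_self_iff.mpr⟩

end Submodule

variable {F ι κ : Type*} [NormedAddCommGroup F] [InnerProductSpace ℝ F] [Fintype ι] [Fintype κ]

theorem Submodule.real_inner_starProjection_self (K : Submodule ℝ F) [K.HasOrthogonalProjection]
    (x : F) : ⟪K.starProjection x, x⟫ = ‖K.starProjection x‖ ^ 2 :=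
  K.re_inner_starProjection_eq_normSq x

theorem OrthonormalBasis.sum_norm_sq_starProjection [FiniteDimensional ℝ F]
    (b : OrthonormalBasis ι ℝ F) (K : Submodule ℝ F) :
    ∑ j, ‖K.starProjection (b j)‖ ^ 2 = finrank ℝ K := by
  rw [← K.trace_starProjection, LinearMap.trace_eq_sum_inner _ b]
  refine Finset.sum_congr rfl fun j _ => ?_
  rw [real_inner_comm, ContinuousLinearMap.coe_coe, K.real_inner_starProjection_self]

theorem norm_sq_eq_sum_mul_norm_sq_starProjection {E : κ → Submodule ℝ F}
    [∀ i, (E i).HasOrthogonalProjection] {c : κ → ℝ}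
    (hE : ∀ x, ∑ i, c i • (E i).starProjection x = x) (x : F) :
    ‖x‖ ^ 2 = ∑ i, c i * ‖(E i).starProjection x‖ ^ 2 := by
  calc ‖x‖ ^ 2 = ⟪∑ i, c i • (E i).starProjection x, x⟫ := by rw [hE, real_inner_self_eq_norm_sq]
    _ = ∑ i, c i * ‖(E i).starProjection x‖ ^ 2 := by
      rw [sum_inner]
      exact Finset.sum_congr rfl fun i _ => by
        rw [real_inner_smul_left, real_inner_starProjection_self]

theorem finrank_eq_sum_mul_sum_norm_sq_starProjection [FiniteDimensional ℝ F]
    {E : κ → Submodule ℝ F} {c : κ → ℝ} (hE : ∀ x, ∑ i, c i • (E i).starProjection x = x)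
    (b : OrthonormalBasis ι ℝ F) (V : Submodule ℝ F) :
    (finrank ℝ V : ℝ) = ∑ i, c i * ∑ j, ‖(E i).starProjection (V.starProjection (b j))‖ ^ 2 := by
  rw [← b.sum_norm_sq_starProjection V]
  simp_rw [Finset.mul_sum]
  rw [Finset.sum_comm]
  exact Finset.sum_congr rfl fun j _ => norm_sq_eq_sum_mul_norm_sq_starProjection hE _

namespace OrthonormalBasis

variable [FiniteDimensional ℝ F] (b : OrthonormalBasis ι ℝ F) (E V : Submodule ℝ F)

theorem finrank_inf_le_sum_norm_sq :
    (finrank ℝ ↥(E ⊓ V) : ℝ) ≤ ∑ j, ‖E.starProjection (V.starProjection (b j))‖ ^ 2 := by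
  rw [← b.sum_norm_sq_starProjection (E ⊓ V)]
  gcongr with j
  exact norm_starProjection_inf_apply_le E V (b j)

theorem finrank_inf_eq_sum_norm_sq_iff :
    (finrank ℝ ↥(E ⊓ V) : ℝ) = ∑ j, ‖E.starProjection (V.starProjection (b j))‖ ^ 2 ↔
      V ∈ End.invtSubmodule (E.starProjection : F →ₗ[ℝ] F) := by
  rw [← b.sum_norm_sq_starProjection (E ⊓ V), Finset.sum_eq_sum_iff_of_le fun j _ => by
    gcongr; exact norm_starProjection_inf_apply_le E V (b j)]
  calc (∀ j ∈ Finset.univ, ‖(E ⊓ V).starProjection (b j)‖ ^ 2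
        = ‖E.starProjection (V.starProjection (b j))‖ ^ 2)
      ↔ ∀ j, E.starProjection (V.starProjection (b j)) ∈ V := by
        refine forall_congr' fun j => ?_
        rw [← starProjection_inf_starProjection_starProjection, pow_left_inj₀ (norm_nonneg _)
          (norm_nonneg _) two_ne_zero, norm_starProjection_apply_eq_iff, mem_inf]
        simp [starProjection_apply_mem]
    _ ↔ ∀ x, E.starProjection (V.starProjection x) ∈ V := by
        refine ⟨fun h => ?_, fun h j => h _⟩
        have hcomap : ⊤ ≤ V.comap (E.starProjection ∘L V.starProjection : F →ₗ[ℝ] F) := by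
          rw [← b.toBasis.span_eq, span_le]
          rintro _ ⟨j, rfl⟩
          simpa using h j
        exact fun x => hcomap trivial
    _ ↔ V ∈ End.invtSubmodule (E.starProjection : F →ₗ[ℝ] F) := by
        rw [End.mem_invtSubmodule_iff_forall_mem_of_mem]
        refine ⟨fun h v hv => ?_, fun h x => h _ (V.starProjection_apply_mem x)⟩
        simpa [V.starProjection_eq_self_iff.mpr hv] using h v

end OrthonormalBasis

theorem stmt10_general {n k : ℕ} (E : Fin k → Submodule ℝ (EuclideanSpace ℝ (Fin n)))
    (c : Fin k → ℝ) (hc : ∀ i, 0 < c i)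
    (hBL : ∀ x : EuclideanSpace ℝ (Fin n),
      ∑ i, c i • ((Submodule.orthogonalProjectionOnto (E i) x : EuclideanSpace ℝ (Fin n))) = x)
    (V : Submodule ℝ (EuclideanSpace ℝ (Fin n))) :
    (∑ i, c i * (Module.finrank ℝ ↥(E i ⊓ V) : ℝ)) ≤ (Module.finrank ℝ V : ℝ) ∧
      ((∑ i, c i * (Module.finrank ℝ ↥(E i ⊓ V) : ℝ)) = (Module.finrank ℝ V : ℝ) ↔
        ∀ i, E i = (E i ⊓ V) ⊔ (E i ⊓ Vᗮ)) := by
  simp_rw [← starProjection_apply] at hBL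
  let b := EuclideanSpace.basisFun (Fin n) ℝ
  have hle : ∀ i ∈ Finset.univ, c i * (finrank ℝ ↥(E i ⊓ V) : ℝ) ≤
      c i * ∑ j, ‖(E i).starProjection (V.starProjection (b j))‖ ^ 2 :=
    fun i _ => mul_le_mul_of_nonneg_left (b.finrank_inf_le_sum_norm_sq _ _) (hc i).le
  rw [finrank_eq_sum_mul_sum_norm_sq_starProjection hBL b V, Finset.sum_eq_sum_iff_of_le hle]
  refine ⟨Finset.sum_le_sum hle, forall_congr' fun i => ?_⟩
  rw [mul_right_inj' (hc i).ne', b.finrank_inf_eq_sum_norm_sq_iff,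
    mem_invtSubmodule_starProjection_iff]
  simp only [Finset.mem_univ, forall_const]

theorem stmt10 {n k : ℕ} (E : Fin k → Submodule ℝ (EuclideanSpace ℝ (Fin n)))
    (c : Fin k → ℝ) (hc : ∀ i, 0 < c i)
    (hBL : ∀ x : EuclideanSpace ℝ (Fin n),
      ∑ i, c i • ((Submodule.orthogonalProjectionOnto (E i) x : EuclideanSpace ℝ (Fin n))) = x)
    (V : Submodule ℝ (EuclideanSpace ℝ (Fin n))) (hV : V ≠ ⊤) :
    (∑ i, c i * (Module.finrank ℝ ↥(E i ⊓ V) : ℝ)) ≤ (Module.finrank ℝ V : ℝ) ∧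
      ((∑ i, c i * (Module.finrank ℝ ↥(E i ⊓ V) : ℝ)) = (Module.finrank ℝ V : ℝ) ↔
        ∀ i, E i = (E i ⊓ V) ⊔ (E i ⊓ Vᗮ)) :=
  stmt10_general E c hc hBL V
end

section
/- (Barthe's determinantal inequality) Let E_1,...,E_k be linear subspaces of R^n and c_1,...,c_k > 0 with ∑_{i=1}^k c_i P_{E_i} = I_n. If A_i : E_i → E_i is a positive definite symmetric linear transformation for each i, then det(∑_{i=1}^k c_i A_i P_{E_i}) ≥ ∏_{i=1}^k (det A_i)^{c_i}. -/
/-!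
Diagonalise each `A i` in an orthonormal eigenbasis of `E i`. The vectors `w = √(c i) • v`, for
`v` running over all these eigenvectors, form a Parseval frame of `ℝⁿ`, and the map in question is
`x ↦ ∑_w μ_w • ⟪w, x⟫ • w` with the eigenvalues `μ_w` as weights. In an orthonormal basis its
matrix is `M * diagonal μ * Mᵀ` with `M * Mᵀ = 1` and squared column norms `c i`. By
Cauchy–Binet its determinant is `∑_S det (M_S)² ∏_{j ∈ S} μ j` over the maximal minors `M_S`; the
weights `det (M_S)²` sum to `1`, and the minors containing column `j` have total weight `‖M_j‖²`.
Weighted AM–GM then gives `det ≥ ∏ j, μ j ^ ‖M_j‖² = ∏ i, det (A i) ^ c i`.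
-/

open Finset Matrix Equiv
open scoped RealInnerProductSpace

namespace Matrix

section CauchyBinet

variable {R : Type*} [CommRing R] {m J : Type*} [Fintype m] [DecidableEq m] [Fintype J]

theorem det_mul_eq_sum_prod_mul_det_submatrix_s12 (M : Matrix m J R) (N : Matrix J m R) :
    (M * N).det = ∑ p : m → J, (∏ i, M i (p i)) * (N.submatrix p id).det := by
  have hrows : (M * N : m → m → R) = fun i => ∑ j, M i j • (N j : m → R) := by
    ext i x; simp [mul_apply, Finset.sum_apply]
  have hexpand := (detRowAlternating : (m → R) [⋀^m]→ₗ[R] R).toMultilinearMap.map_sum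
    (fun i j => M i j • (N j : m → R))
  simp only [AlternatingMap.coe_multilinearMap, AlternatingMap.map_smul_univ, smul_eq_mul]
    at hexpand
  rw [det, hrows, hexpand]
  rfl

/-- Cauchy–Binet, summed over all maps `p : m → J` instead of subsets of `J`: every subset of
size `card m` occurs `(card m)!` times, and non-injective `p` contribute `0`. -/
theorem card_factorial_mul_det_mul (M : Matrix m J R) (N : Matrix J m R) :
    ((Fintype.card m).factorial : R) * (M * N).det
      = ∑ p : m → J, (M.submatrix id p).det * (N.submatrix p id).det := by
  have hreindex (τ : Perm m) : (M * N).det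
      = ∑ p : m → J, (Perm.sign τ * ∏ i, M i (p (τ i))) * (N.submatrix p id).det := by
    rw [det_mul_eq_sum_prod_mul_det_submatrix_s12,
      ← (Equiv.arrowCongr τ.symm (Equiv.refl J)).sum_comp]
    refine Finset.sum_congr rfl fun p _ => ?_
    have hperm : (N.submatrix (p ∘ τ) id).det = Perm.sign τ * (N.submatrix p id).det := by
      rw [← det_permute, submatrix_submatrix, Function.id_comp]
    change (∏ i, M i (p (τ i))) * (N.submatrix (p ∘ τ) id).det = _
    rw [hperm]
    ring
  have hminor (p : m → J) : ∑ τ : Perm m, (Perm.sign τ : R) * ∏ i, M i (p (τ i))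
      = (M.submatrix id p).det := by
    rw [← det_transpose, det_apply']
    rfl
  calc ((Fintype.card m).factorial : R) * (M * N).det
      = ∑ τ : Perm m, (M * N).det := by
        rw [Finset.sum_const, Finset.card_univ, Fintype.card_perm, nsmul_eq_mul]
    _ = ∑ p : m → J, (M.submatrix id p).det * (N.submatrix p id).det := by
        rw [Finset.sum_congr rfl fun τ _ => hreindex τ, Finset.sum_comm]
        simp only [← Finset.sum_mul, hminor]

end CauchyBinet

section CauchyBinetWeight

variable {m J : Type*} [Fintype m] [DecidableEq m]

noncomputable def cauchyBinetWeight (M : Matrix m J ℝ) (p : m → J) : ℝ :=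
  (M.submatrix id p).det ^ 2 / (Fintype.card m).factorial

theorem cauchyBinetWeight_nonneg (M : Matrix m J ℝ) (p : m → J) : 0 ≤ cauchyBinetWeight M p := by
  unfold cauchyBinetWeight; positivity

theorem cauchyBinetWeight_eq_zero_of_not_injective (M : Matrix m J ℝ) {p : m → J}
    (hp : ¬ Function.Injective p) : cauchyBinetWeight M p = 0 := by
  obtain ⟨i, i', hpi, hii'⟩ : ∃ i i', p i = p i' ∧ i ≠ i' := by
    simpa [Function.Injective] using hp
  rw [cauchyBinetWeight, det_zero_of_column_eq hii' fun x => by simp [hpi]]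
  simp

variable [Fintype J] [DecidableEq J]

theorem det_mul_diagonal_mul_transpose (M : Matrix m J ℝ) (l : J → ℝ) :
    (M * diagonal l * Mᵀ).det = ∑ p, cauchyBinetWeight M p * ∏ i, l (p i) := by
  have hminor (p : m → J) : ((M * diagonal l).submatrix id p).det * (Mᵀ.submatrix p id).det
      = (M.submatrix id p).det ^ 2 * ∏ i, l (p i) := by
    have hcols : (M * diagonal l).submatrix id p = M.submatrix id p * diagonal (l ∘ p) := by
      ext x i; simp
    rw [hcols, ← transpose_submatrix, det_mul, det_diagonal, det_transpose]
    simp only [Function.comp_apply]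
    ring
  have hfac : ((Fintype.card m).factorial : ℝ) ≠ 0 := by positivity
  rw [← mul_right_inj' hfac, card_factorial_mul_det_mul, Finset.mul_sum]
  refine Finset.sum_congr rfl fun p _ => ?_
  rw [hminor, cauchyBinetWeight]
  field_simp

theorem sum_cauchyBinetWeight {M : Matrix m J ℝ} (hM : M * Mᵀ = 1) :
    ∑ p, cauchyBinetWeight M p = 1 := by
  simpa [hM] using (det_mul_diagonal_mul_transpose M 1).symm

theorem sum_cauchyBinetWeight_of_exists_apply_eq {M : Matrix m J ℝ} (hM : M * Mᵀ = 1) (j : J) :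
    ∑ p with ∃ i, p i = j, cauchyBinetWeight M p = ∑ x, M x j ^ 2 := by
  -- Evaluate the expansion at the indicator of `J \ {j}`: only the maps missing `j` survive,
  -- while the matrix becomes the rank-one perturbation `1 - u * uᵀ` of the identity.
  set u : Matrix m Unit ℝ := M.submatrix id fun _ => j
  set l₀ : J → ℝ := 1 - Pi.single j 1
  have hdet : (M * diagonal l₀ * Mᵀ).det = 1 - ∑ x, M x j ^ 2 := by
    have hrank : M * diagonal (Pi.single j 1 : J → ℝ) * Mᵀ = u * uᵀ := by
      ext x y
      rw [mul_apply, Finset.sum_eq_single j (fun k _ hk => by simp [mul_diagonal, hk]) (by simp),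
        mul_diagonal]
      simp [u, mul_apply]
    have hl₀ : diagonal l₀ = 1 - diagonal (Pi.single j 1 : J → ℝ) := by
      rw [← diagonal_one, diagonal_sub]; rfl
    rw [hl₀, Matrix.mul_sub, Matrix.sub_mul, Matrix.mul_one, hM, hrank, det_one_sub_mul_comm,
      det_unique]
    simp [mul_apply, u, sq]
  have hprod (p : m → J) : ∏ i, l₀ (p i) = if ∃ i, p i = j then 0 else 1 := by
    split_ifs with h
    · obtain ⟨i, hi⟩ := h
      exact Finset.prod_eq_zero (Finset.mem_univ i) (by simp [l₀, hi])
    · push Not at h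
      exact Finset.prod_eq_one fun i _ => by simp [l₀, h i]
  have hcompl := det_mul_diagonal_mul_transpose M l₀
  simp only [hdet, hprod, mul_ite, mul_zero, mul_one, Finset.sum_ite, Finset.sum_const_zero,
    zero_add] at hcompl
  have htot := sum_cauchyBinetWeight hM
  rw [← Finset.sum_filter_add_sum_filter_not univ (fun p : m → J => ∃ i, p i = j)] at htot
  linarith

theorem prod_rpow_cauchyBinetWeight_eq_prod_rpow_ite (M : Matrix m J ℝ) {l : J → ℝ}
    (hl : ∀ j, 0 < l j) (p : m → J) :
    (∏ i, l (p i)) ^ cauchyBinetWeight M p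
      = ∏ j, l j ^ (if ∃ i, p i = j then cauchyBinetWeight M p else 0) := by
  by_cases hp : Function.Injective p
  · have hite (j : J) : l j ^ (if ∃ i, p i = j then cauchyBinetWeight M p else 0)
        = if j ∈ univ.image p then l j ^ cauchyBinetWeight M p else 1 := by
      split_ifs <;> simp_all
    rw [Finset.prod_congr rfl fun j _ => hite j, Finset.prod_ite_mem, Finset.univ_inter,
      Finset.prod_image fun i _ i' _ h => hp h, Real.finsetProd_rpow _ _ fun i _ => (hl (p i)).le]
  · rw [cauchyBinetWeight_eq_zero_of_not_injective M hp]
    simp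

theorem prod_rpow_le_det_mul_diagonal_mul_transpose {M : Matrix m J ℝ} (hM : M * Mᵀ = 1)
    {l : J → ℝ} (hl : ∀ j, 0 < l j) :
    ∏ j, l j ^ (∑ x, M x j ^ 2) ≤ (M * diagonal l * Mᵀ).det := by
  calc ∏ j, l j ^ (∑ x, M x j ^ 2)
      = ∏ p, (∏ i, l (p i)) ^ cauchyBinetWeight M p := by
        simp_rw [prod_rpow_cauchyBinetWeight_eq_prod_rpow_ite M hl,
          ← sum_cauchyBinetWeight_of_exists_apply_eq hM]
        rw [Finset.prod_comm]
        refine Finset.prod_congr rfl fun j _ => ?_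
        rw [← Real.rpow_sum_of_pos (hl j), Finset.sum_ite, Finset.sum_const_zero, add_zero]
    _ ≤ ∑ p, cauchyBinetWeight M p * ∏ i, l (p i) :=
        Real.geom_mean_le_arith_mean_weighted _ _ _
          (fun p _ => cauchyBinetWeight_nonneg M p) (sum_cauchyBinetWeight hM)
          (fun p _ => Finset.prod_nonneg fun i _ => (hl (p i)).le)
    _ = (M * diagonal l * Mᵀ).det := (det_mul_diagonal_mul_transpose M l).symm

end CauchyBinetWeight

end Matrix

section Frame

variable {V : Type*} [NormedAddCommGroup V] [InnerProductSpace ℝ V]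
  {ι J : Type*} [Fintype ι] [DecidableEq ι] [Fintype J] [DecidableEq J]

theorem LinearMap.toMatrix_orthonormalBasis_eq_mul_diagonal_mul_transpose
    (b : OrthonormalBasis ι ℝ V) {w : J → V} {l : J → ℝ} {T : V →ₗ[ℝ] V}
    (hT : ∀ x, T x = ∑ j, l j • ⟪w j, x⟫ • w j) :
    LinearMap.toMatrix b.toBasis b.toBasis T
      = of (fun x j => ⟪b x, w j⟫) * diagonal l * (of fun x j => ⟪b x, w j⟫)ᵀ := by
  ext x y
  rw [LinearMap.toMatrix_apply, b.coe_toBasis_repr_apply, b.repr_apply_apply, b.coe_toBasis, hT,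
    inner_sum, Matrix.mul_apply]
  refine Finset.sum_congr rfl fun j _ => ?_
  rw [inner_smul_right, inner_smul_right, mul_diagonal, transpose_apply, of_apply, of_apply,
    real_inner_comm (w j) (b x), real_inner_comm (w j) (b y)]
  ring

theorem prod_rpow_le_det_of_sum_inner_smul_eq_self [FiniteDimensional ℝ V] {w : J → V}
    (hw : ∀ x, ∑ j, ⟪w j, x⟫ • w j = x) {l : J → ℝ} (hl : ∀ j, 0 < l j) {T : V →ₗ[ℝ] V}
    (hT : ∀ x, T x = ∑ j, l j • ⟪w j, x⟫ • w j) :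
    ∏ j, l j ^ (‖w j‖ ^ 2) ≤ LinearMap.det T := by
  set b := stdOrthonormalBasis ℝ V
  set M : Matrix (Fin (Module.finrank ℝ V)) J ℝ := Matrix.of fun x j => ⟪b x, w j⟫
  have hM : M * Mᵀ = 1 := by
    have := LinearMap.toMatrix_orthonormalBasis_eq_mul_diagonal_mul_transpose b
      (T := LinearMap.id) (l := fun _ => 1) fun x => by simpa using (hw x).symm
    rwa [LinearMap.toMatrix_id, Matrix.diagonal_one, Matrix.mul_one, eq_comm] at this
  have hcol (j : J) : ∑ x, M x j ^ 2 = ‖w j‖ ^ 2 := b.sum_sq_inner_right (w j)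
  rw [← LinearMap.det_toMatrix b.toBasis,
    LinearMap.toMatrix_orthonormalBasis_eq_mul_diagonal_mul_transpose b hT]
  simpa only [hcol] using Matrix.prod_rpow_le_det_mul_diagonal_mul_transpose hM hl

theorem prod_rpow_le_det_of_sum_smul_inner_smul_eq_self [FiniteDimensional ℝ V] {c : J → ℝ}
    (hc : ∀ j, 0 ≤ c j) {u : J → V} (hu : ∀ x, ∑ j, c j • ⟪u j, x⟫ • u j = x) {l : J → ℝ}
    (hl : ∀ j, 0 < l j) {T : V →ₗ[ℝ] V} (hT : ∀ x, T x = ∑ j, c j • l j • ⟪u j, x⟫ • u j) :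
    ∏ j, l j ^ (c j * ‖u j‖ ^ 2) ≤ LinearMap.det T := by
  set w : J → V := fun j => √(c j) • u j
  have hw (j : J) (x : V) : ⟪w j, x⟫ • w j = c j • ⟪u j, x⟫ • u j := by
    simp only [w, real_inner_smul_left, smul_smul]
    congr 1
    linear_combination ⟪u j, x⟫ * Real.mul_self_sqrt (hc j)
  have hnorm (j : J) : ‖w j‖ ^ 2 = c j * ‖u j‖ ^ 2 := by
    rw [norm_smul, mul_pow, Real.norm_eq_abs, sq_abs, Real.sq_sqrt (hc j)]
  simp_rw [← hnorm]
  refine prod_rpow_le_det_of_sum_inner_smul_eq_self (fun x => by simpa only [hw] using hu x) hl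
    fun x => ?_
  simp only [hT, hw, smul_comm (c _) (l _)]

end Frame

namespace LinearMap.IsSymmetric

variable {E : Type*} [NormedAddCommGroup E] [InnerProductSpace ℝ E]

theorem eigenvalues_pos [FiniteDimensional ℝ E] {T : E →ₗ[ℝ] E} (hT : T.IsSymmetric)
    (hpos : ∀ x, x ≠ 0 → 0 < ⟪T x, x⟫) {n : ℕ} (hn : Module.finrank ℝ E = n) (a : Fin n) :
    0 < hT.eigenvalues hn a := by
  have hv := (hT.eigenvectorBasis hn).orthonormal.1 a
  have := hpos _ (ne_zero_of_norm_ne_zero (hv.symm ▸ one_ne_zero))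
  rwa [hT.apply_eigenvectorBasis, real_inner_smul_left, real_inner_self_eq_norm_sq, hv, one_pow,
    mul_one] at this

theorem subtype_comp_comp_orthogonalProjectionOnto_apply {K : Submodule ℝ E} [FiniteDimensional ℝ K]
    {A : K →ₗ[ℝ] K} (hA : A.IsSymmetric) {n : ℕ} (hn : Module.finrank ℝ K = n) (x : E) :
    (K.subtype ∘ₗ A ∘ₗ K.orthogonalProjectionOnto.toLinearMap) x
      = ∑ a, hA.eigenvalues hn a • ⟪(hA.eigenvectorBasis hn a : E), x⟫
          • (hA.eigenvectorBasis hn a : E) := by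
  simp only [LinearMap.comp_apply, ContinuousLinearMap.coe_coe,
    (hA.eigenvectorBasis hn).orthogonalProjectionOnto_apply_eq_sum, map_sum, map_smul,
    hA.apply_eigenvectorBasis, Submodule.subtype_apply]
  exact Finset.sum_congr rfl fun a _ => smul_comm _ _ _

end LinearMap.IsSymmetric

theorem stmt12 {n k : ℕ} (E : Fin k → Submodule ℝ (EuclideanSpace ℝ (Fin n)))
    (c : Fin k → ℝ) (hc : ∀ i, 0 < c i)
    (hBL : ∀ x : EuclideanSpace ℝ (Fin n),
      ∑ i, c i • ((Submodule.orthogonalProjectionOnto (E i) x : EuclideanSpace ℝ (Fin n))) = x)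
    (A : ∀ i, (E i) →ₗ[ℝ] (E i))
    (hsym : ∀ i, ∀ x y : E i, (inner ℝ (A i x) y : ℝ) = inner ℝ x (A i y))
    (hpos : ∀ i, ∀ x : E i, x ≠ 0 → 0 < (inner ℝ (A i x) x : ℝ)) :
    ∏ i, LinearMap.det (A i) ^ c i ≤
      LinearMap.det (∑ i, c i •
        ((E i).subtype ∘ₗ (A i) ∘ₗ (Submodule.orthogonalProjectionOnto (E i)).toLinearMap)) := by
  have hA : ∀ i, (A i).IsSymmetric := hsym
  let v i := (hA i).eigenvectorBasis rfl
  let μ i := (hA i).eigenvalues rfl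
  let u (j : Σ i, Fin (Module.finrank ℝ (E i))) : EuclideanSpace ℝ (Fin n) := v j.1 j.2
  have hμ (j : Σ i, Fin (Module.finrank ℝ (E i))) : 0 < μ j.1 j.2 :=
    (hA j.1).eigenvalues_pos (hpos j.1) rfl j.2
  have hu j : ‖u j‖ = 1 := by rw [← Submodule.coe_norm, (v j.1).orthonormal.1 j.2]
  have hframe x : ∑ j, c j.1 • ⟪u j, x⟫ • u j = x := by
    simpa [u, Fintype.sum_sigma, ← Finset.smul_sum, (v _).orthogonalProjectionOnto_apply_eq_sum]
      using hBL x
  calc ∏ i, LinearMap.det (A i) ^ c i = ∏ i, ∏ a, μ i a ^ c i := by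
        refine Finset.prod_congr rfl fun i _ => ?_
        rw [(hA i).det_eq_prod_eigenvalues rfl]
        exact (Real.finsetProd_rpow _ (μ i) (fun a _ => (hμ ⟨i, a⟩).le) (c i)).symm
    _ = ∏ j, μ j.1 j.2 ^ (c j.1 * ‖u j‖ ^ 2) := by
        simp only [hu, one_pow, mul_one, Fintype.prod_sigma]
    _ ≤ LinearMap.det (∑ i, c i •
          ((E i).subtype ∘ₗ (A i) ∘ₗ (Submodule.orthogonalProjectionOnto (E i)).toLinearMap)) :=
        prod_rpow_le_det_of_sum_smul_inner_smul_eq_self (fun j => (hc j.1).le) hframe hμ fun x => by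
          rw [LinearMap.sum_apply, Fintype.sum_sigma]
          refine Finset.sum_congr rfl fun i _ => ?_
          rw [LinearMap.smul_apply, (hA i).subtype_comp_comp_orthogonalProjectionOnto_apply rfl,
            Finset.smul_sum]
end

section
/- Let E_1,...,E_k be linear subspaces of R^n and c_1,...,c_k > 0 with ∑ c_i P_{E_i} = I_n, and let Φ be a positive definite symmetric linear map on R^n whose eigenspaces are critical subspaces. Then ∫_{R^n} sup{ ∏_{i=1}^k e^{−c_i‖Φx_i‖²} : x = ∑ c_i x_i, x_i ∈ E_i } dx = ∏_{i=1}^k (∫_{E_i} e^{−‖Φx_i‖²} dx_i)^{c_i}, i.e., the Gaussians x ↦ e^{−‖Φx‖²} are extremizers in the Geometric Barthe inequality. -/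
/-!
For `x = ∑ c i • x i` with `x i ∈ E i`, the identity `∑ c i • P_{E i} = 1` gives
`‖x‖² = ∑ c i ⟪P_{E i} x, x i⟫ ≤ (‖x‖² + ∑ c i ‖x i‖²) / 2`, so `‖x‖² ≤ ∑ c i ‖x i‖²`, with
equality at `x i = P_{E i} x`. Taking traces gives `∑ c i dim E i = n`; since also
`∑_μ ∑_i c i dim (E i ⊓ V_μ) = ∑_μ dim V_μ = n` for the eigenspaces `V_μ` of `Φ` (which are
critical), each `E i` is the direct sum of the `E i ⊓ V_μ`. Hence `Φ` preserves every `E i` and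
commutes with its projection, and the supremum at `x` equals `exp (-‖Φ x‖²)`. Both sides are
then Gaussian integrals, `π^(n/2) / det Φ` and `∏ (π^(dim E i / 2) / det Φ|_{E i}) ^ c i`, which
agree because `det Φ|_{E i} = ∏_μ μ ^ dim (E i ⊓ V_μ)` and criticality says
`∑ c i dim (E i ⊓ V_μ) = dim V_μ`.
-/

open scoped BigOperators
open MeasureTheory

/-- A nonzero subspace `V` is critical for the data `(E, c)` if
`∑ i, c i · dim (E i ⊓ V) = dim V`. -/
def IsCritical {n k : ℕ} (E : Fin k → Submodule ℝ (EuclideanSpace ℝ (Fin n)))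
    (c : Fin k → ℝ) (V : Submodule ℝ (EuclideanSpace ℝ (Fin n))) : Prop :=
  V ≠ ⊥ ∧ (∑ i, c i * (Module.finrank ℝ ↥(E i ⊓ V) : ℝ)) = (Module.finrank ℝ V : ℝ)

open Module Module.End
open scoped RealInnerProductSpace

theorem Submodule.finrank_biSup_eq_sum {K V α : Type*} [DivisionRing K] [AddCommGroup V]
    [Module K V] [FiniteDimensional K V] {p : α → Submodule K V} (hp : iSupIndep p)
    (s : Finset α) : finrank K ↥(⨆ a ∈ s, p a) = ∑ a ∈ s, finrank K (p a) := by
  classical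
  induction s using Finset.induction_on with
  | empty => simp
  | @insert a s ha ih =>
    have hdisj : Disjoint (p a) (⨆ b ∈ s, p b) :=
      (hp a).mono_right <| iSup₂_le fun b hb =>
        le_iSup₂_of_le b (show b ≠ a from fun h => ha (h ▸ hb)) le_rfl
    rw [Finset.sum_insert ha, ← ih, Finset.iSup_insert,
      ← Submodule.finrank_sup_add_finrank_inf_eq, hdisj.eq_bot, finrank_bot, add_zero]

theorem Module.End.finrank_eigenspace_restrict {K V : Type*} [Field K] [AddCommGroup V]
    [Module K V] {T : End K V} {W : Submodule K V} (hW : ∀ x ∈ W, T x ∈ W) (μ : K) :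
    finrank K (eigenspace (T.restrict hW) μ) = finrank K ↥(W ⊓ eigenspace T μ) := by
  rw [Submodule.inf_genEigenspace T W hW]
  exact (Submodule.equivMapOfInjective _ W.injective_subtype _).finrank_eq

theorem Module.End.HasEigenvalue.of_restrict {K V : Type*} [Field K] [AddCommGroup V]
    [Module K V] {T : End K V} {W : Submodule K V} {hW : ∀ x ∈ W, T x ∈ W} {μ : K}
    (h : HasEigenvalue (T.restrict hW) μ) : HasEigenvalue T μ :=
  hasEigenvalue_iff.mpr fun h0 =>
    hasEigenvalue_iff.mp h (eigenspace_restrict_eq_bot hW (by simp [h0]))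

section Symmetric

variable {F : Type*} [NormedAddCommGroup F] [InnerProductSpace ℝ F] {T : F →ₗ[ℝ] F}

theorem Module.End.HasEigenvalue.pos_of_inner_pos (hpos : ∀ x, x ≠ 0 → 0 < ⟪T x, x⟫)
    {μ : ℝ} (hμ : HasEigenvalue T μ) : 0 < μ := by
  obtain ⟨v, hv⟩ := hμ.exists_hasEigenvector
  have h := hpos v hv.2
  rw [hv.apply_eq_smul, real_inner_smul_left, real_inner_self_eq_norm_sq] at h
  exact pos_of_mul_pos_left h (sq_nonneg _)

variable [FiniteDimensional ℝ F]

theorem LinearMap.IsSymmetric.sum_finrank_eigenspace (hT : T.IsSymmetric) {s : Finset ℝ}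
    (hs : ∀ μ, HasEigenvalue T μ → μ ∈ s) :
    ∑ μ ∈ s, finrank ℝ (eigenspace T μ) = finrank ℝ F := by
  classical
  have hmaps : ∀ j ∈ Finset.univ, hT.eigenvalues rfl j ∈ s :=
    fun j _ => hs _ (hT.hasEigenvalue_eigenvalues rfl j)
  rw [Finset.sum_congr rfl fun μ _ => (hT.card_filter_eigenvalues_eq rfl μ).symm]
  simpa using (Finset.card_eq_sum_card_fiberwise hmaps).symm

theorem LinearMap.IsSymmetric.det_eq_prod_pow_finrank_eigenspace (hT : T.IsSymmetric)
    {s : Finset ℝ} (hs : ∀ μ, HasEigenvalue T μ → μ ∈ s) :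
    T.det = ∏ μ ∈ s, μ ^ finrank ℝ (eigenspace T μ) := by
  classical
  have hmaps : ∀ j ∈ Finset.univ, hT.eigenvalues rfl j ∈ s :=
    fun j _ => hs _ (hT.hasEigenvalue_eigenvalues rfl j)
  rw [hT.det_eq_prod_eigenvalues rfl, ← Finset.prod_fiberwise_of_maps_to' hmaps]
  refine Finset.prod_congr rfl fun μ _ => ?_
  rw [Finset.prod_const, ← hT.card_filter_eigenvalues_eq rfl]
  simp

theorem LinearMap.IsSymmetric.det_pos (hT : T.IsSymmetric) (hpos : ∀ x, x ≠ 0 → 0 < ⟪T x, x⟫) :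
    0 < T.det := by
  rw [hT.det_eq_prod_eigenvalues rfl]
  exact Finset.prod_pos fun j _ => (hT.hasEigenvalue_eigenvalues rfl j).pos_of_inner_pos hpos

end Symmetric

section GeometricBrascampLieb

variable {F ι : Type*} [NormedAddCommGroup F] [InnerProductSpace ℝ F] [Fintype ι]
  {E : ι → Submodule ℝ F} [∀ i, (E i).HasOrthogonalProjection] {c : ι → ℝ}

theorem sum_mul_norm_sq_starProjection (hE : ∀ x, ∑ i, c i • (E i).starProjection x = x)
    (x : F) : ∑ i, c i * ‖(E i).starProjection x‖ ^ 2 = ‖x‖ ^ 2 := by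
  calc ∑ i, c i * ‖(E i).starProjection x‖ ^ 2
      = ⟪∑ i, c i • (E i).starProjection x, x⟫ := by
        simp only [sum_inner, real_inner_smul_left]
        refine Finset.sum_congr rfl fun i _ => ?_
        simpa using congrArg (c i * ·) ((E i).re_inner_starProjection_eq_normSq x).symm
    _ = ‖x‖ ^ 2 := by rw [hE, real_inner_self_eq_norm_sq]

theorem norm_sq_sum_smul_le (hc : ∀ i, 0 ≤ c i) (hE : ∀ x, ∑ i, c i • (E i).starProjection x = x)
    {p : ι → F} (hp : ∀ i, p i ∈ E i) : ‖∑ i, c i • p i‖ ^ 2 ≤ ∑ i, c i * ‖p i‖ ^ 2 := by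
  obtain ⟨x, hxp⟩ : ∃ x, x = ∑ i, c i • p i := ⟨_, rfl⟩
  rw [← hxp]
  have hterm : ∀ i, ⟪x, p i⟫ ≤ (‖(E i).starProjection x‖ ^ 2 + ‖p i‖ ^ 2) / 2 := by
    intro i
    have hproj : ⟪x, p i⟫ = ⟪(E i).starProjection x, p i⟫ := by
      rw [Submodule.inner_starProjection_left_eq_right,
        (Submodule.starProjection_eq_self_iff).mpr (hp i)]
    rw [hproj]
    nlinarith [real_inner_le_norm ((E i).starProjection x) (p i),
      sq_nonneg (‖(E i).starProjection x‖ - ‖p i‖)]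
  have hx : ‖x‖ ^ 2 = ∑ i, c i * ⟪x, p i⟫ := by
    rw [← real_inner_self_eq_norm_sq]
    nth_rw 2 [hxp]
    simp only [inner_sum, real_inner_smul_right]
  have hbound : ∑ i, c i * ⟪x, p i⟫ ≤ (‖x‖ ^ 2 + ∑ i, c i * ‖p i‖ ^ 2) / 2 := by
    calc ∑ i, c i * ⟪x, p i⟫
        ≤ ∑ i, c i * ((‖(E i).starProjection x‖ ^ 2 + ‖p i‖ ^ 2) / 2) :=
          Finset.sum_le_sum fun i _ => mul_le_mul_of_nonneg_left (hterm i) (hc i)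
      _ = (‖x‖ ^ 2 + ∑ i, c i * ‖p i‖ ^ 2) / 2 := by
          rw [← sum_mul_norm_sq_starProjection hE x, ← Finset.sum_add_distrib, Finset.sum_div]
          exact Finset.sum_congr rfl fun i _ => by ring
  linarith

theorem sum_mul_finrank_eq_finrank [FiniteDimensional ℝ F]
    (hE : ∀ x, ∑ i, c i • (E i).starProjection x = x) :
    ∑ i, c i * (finrank ℝ (E i) : ℝ) = finrank ℝ F := by
  have hproj : ∀ i, LinearMap.IsProj (E i) ((E i).starProjection : F →ₗ[ℝ] F) := fun i =>
    ⟨(E i).starProjection_apply_mem, fun _ hx => Submodule.starProjection_eq_self_iff.mpr hx⟩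
  have hsum : ∑ i, c i • ((E i).starProjection : F →ₗ[ℝ] F) = LinearMap.id :=
    LinearMap.ext fun x => by simpa using hE x
  simpa [map_sum, (hproj _).trace] using congrArg (LinearMap.trace ℝ F) hsum

theorem LinearMap.IsSymmetric.starProjection_apply_comm {T : F →ₗ[ℝ] F} (hT : T.IsSymmetric)
    {K : Submodule ℝ F} [K.HasOrthogonalProjection] (hK : ∀ x ∈ K, T x ∈ K) (x : F) :
    K.starProjection (T x) = T (K.starProjection x) := by
  refine Submodule.eq_starProjection_of_mem_of_inner_eq_zero
    (hK _ (K.starProjection_apply_mem x)) fun w hw => ?_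
  rw [← map_sub, hT, Submodule.starProjection_inner_eq_zero _ _ (hK w hw)]

theorem iSup_prod_exp_eq_exp (hc : ∀ i, 0 ≤ c i) (hE : ∀ x, ∑ i, c i • (E i).starProjection x = x)
    {T : F →ₗ[ℝ] F} (hT : T.IsSymmetric) (hinv : ∀ i, ∀ x ∈ E i, T x ∈ E i) (x : F) :
    (⨆ p : {p : ι → F // (∀ i, p i ∈ E i) ∧ x = ∑ i, c i • p i},
        ∏ i, Real.exp (-(c i) * ‖T (p.1 i)‖ ^ 2)) = Real.exp (-‖T x‖ ^ 2) := by
  have hprod : ∀ p : ι → F, ∏ i, Real.exp (-(c i) * ‖T (p i)‖ ^ 2) =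
      Real.exp (-∑ i, c i * ‖T (p i)‖ ^ 2) := fun p => by
    rw [← Real.exp_sum, ← Finset.sum_neg_distrib]
    simp only [neg_mul]
  have hle : ∀ p : {p : ι → F // (∀ i, p i ∈ E i) ∧ x = ∑ i, c i • p i},
      ∏ i, Real.exp (-(c i) * ‖T (p.1 i)‖ ^ 2) ≤ Real.exp (-‖T x‖ ^ 2) := by
    rintro ⟨p, hp, rfl⟩
    rw [hprod, Real.exp_le_exp, neg_le_neg_iff, map_sum]
    simp only [map_smul]
    exact norm_sq_sum_smul_le hc hE fun i => hinv i _ (hp i)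
  let p₀ : {p : ι → F // (∀ i, p i ∈ E i) ∧ x = ∑ i, c i • p i} :=
    ⟨fun i => (E i).starProjection x, fun i => (E i).starProjection_apply_mem x, (hE x).symm⟩
  have hp₀ : ∏ i, Real.exp (-(c i) * ‖T (p₀.1 i)‖ ^ 2) = Real.exp (-‖T x‖ ^ 2) := by
    rw [hprod]
    simp only [p₀, ← hT.starProjection_apply_comm (hinv _), sum_mul_norm_sq_starProjection hE]
  have : Nonempty {p : ι → F // (∀ i, p i ∈ E i) ∧ x = ∑ i, c i • p i} := ⟨p₀⟩
  exact le_antisymm (ciSup_le hle) (hp₀ ▸ le_ciSup ⟨_, Set.forall_mem_range.mpr hle⟩ p₀)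

end GeometricBrascampLieb

theorem integral_exp_neg_norm_sq_comp {F : Type*} [NormedAddCommGroup F] [InnerProductSpace ℝ F]
    [FiniteDimensional ℝ F] [MeasurableSpace F] [BorelSpace F] {T : F →ₗ[ℝ] F} (hT : 0 < T.det) :
    ∫ x, Real.exp (-‖T x‖ ^ 2) = Real.pi ^ (finrank ℝ F / 2 : ℝ) / T.det := by
  have hg : ∫ y : F, Real.exp (-‖y‖ ^ 2) = Real.pi ^ (finrank ℝ F / 2 : ℝ) := by
    simpa using GaussianFourier.integral_rexp_neg_mul_sq_norm (V := F) one_pos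
  rw [← integral_map (f := fun y => Real.exp (-‖y‖ ^ 2))
      (T.continuous_of_finiteDimensional.aemeasurable) (by fun_prop),
    Measure.map_linearMap_addHaar_eq_smul_addHaar volume hT.ne', integral_smul_measure, hg,
    ENNReal.toReal_ofReal (abs_nonneg _), abs_of_pos (inv_pos.mpr hT), smul_eq_mul,
    inv_mul_eq_div]

section Critical

variable {F ι : Type*} [NormedAddCommGroup F] [InnerProductSpace ℝ F] [FiniteDimensional ℝ F]
  [Fintype ι] {E : ι → Submodule ℝ F} {c : ι → ℝ} {T : F →ₗ[ℝ] F}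

theorem mapsTo_of_eigenspaces_critical (hc : ∀ i, 0 < c i)
    (hE : ∀ x, ∑ i, c i • (E i).starProjection x = x) (hT : T.IsSymmetric)
    (hcrit : ∀ μ, HasEigenvalue T μ →
      ∑ i, c i * (finrank ℝ ↥(E i ⊓ eigenspace T μ) : ℝ) = finrank ℝ (eigenspace T μ))
    (i : ι) : ∀ x ∈ E i, T x ∈ E i := by
  classical
  set s := (finite_hasEigenvalue T).toFinset
  have hs : ∀ μ, HasEigenvalue T μ ↔ μ ∈ s := fun μ => (finite_hasEigenvalue T).mem_toFinset.symm
  set W : ι → Submodule ℝ F := fun j => ⨆ μ ∈ s, E j ⊓ eigenspace T μ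
  have hWE : ∀ j, W j ≤ E j := fun j => iSup₂_le fun μ _ => inf_le_left
  have hW : ∀ j, finrank ℝ (W j) = ∑ μ ∈ s, finrank ℝ ↥(E j ⊓ eigenspace T μ) := fun j =>
    Submodule.finrank_biSup_eq_sum ((eigenspaces_iSupIndep T).mono fun μ => inf_le_right) s
  have hsum : ∑ j, c j * (finrank ℝ (W j) : ℝ) = ∑ j, c j * (finrank ℝ (E j) : ℝ) := by
    calc ∑ j, c j * (finrank ℝ (W j) : ℝ)
        = ∑ μ ∈ s, ∑ j, c j * (finrank ℝ ↥(E j ⊓ eigenspace T μ) : ℝ) := by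
          simp_rw [hW, Nat.cast_sum, Finset.mul_sum]
          exact Finset.sum_comm
      _ = finrank ℝ F := by
          rw [Finset.sum_congr rfl fun μ hμ => hcrit μ ((hs μ).mpr hμ),
            ← Nat.cast_sum, hT.sum_finrank_eigenspace fun μ => (hs μ).mp]
      _ = ∑ j, c j * (finrank ℝ (E j) : ℝ) := (sum_mul_finrank_eq_finrank hE).symm
  have hWi : W i = E i := by
    refine Submodule.eq_of_le_of_finrank_eq (hWE i) ?_
    have hle : ∀ j ∈ Finset.univ, c j * (finrank ℝ (W j) : ℝ) ≤ c j * (finrank ℝ (E j) : ℝ) :=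
      fun j _ => mul_le_mul_of_nonneg_left (by exact_mod_cast Submodule.finrank_mono (hWE j))
        (hc j).le
    exact_mod_cast mul_left_cancel₀ (hc i).ne'
      ((Finset.sum_eq_sum_iff_of_le hle).mp hsum i (Finset.mem_univ i))
  have hWinv : W i ≤ (W i).comap T := iSup₂_le fun μ hμ y hy => by
    obtain ⟨hyE, hyV⟩ := Submodule.mem_inf.mp hy
    have hTy : T y = μ • y := mem_eigenspace_iff.mp hyV
    refine (le_iSup₂_of_le μ hμ le_rfl : E i ⊓ eigenspace T μ ≤ W i) ?_
    rw [Submodule.mem_inf, hTy]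
    exact ⟨(E i).smul_mem μ hyE, (eigenspace T μ).smul_mem μ hyV⟩
  intro x hx
  rw [← hWi] at hx ⊢
  exact hWinv hx

theorem prod_det_restrict_rpow_eq_det (hT : T.IsSymmetric) (hpos : ∀ x, x ≠ 0 → 0 < ⟪T x, x⟫)
    (hcrit : ∀ μ, HasEigenvalue T μ →
      ∑ i, c i * (finrank ℝ ↥(E i ⊓ eigenspace T μ) : ℝ) = finrank ℝ (eigenspace T μ))
    (hinv : ∀ i, ∀ x ∈ E i, T x ∈ E i) :
    ∏ i, (T.restrict (hinv i)).det ^ c i = T.det := by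
  classical
  set s := (finite_hasEigenvalue T).toFinset
  have hs : ∀ μ, HasEigenvalue T μ ↔ μ ∈ s := fun μ => (finite_hasEigenvalue T).mem_toFinset.symm
  have hμ : ∀ μ ∈ s, 0 < μ := fun μ h => ((hs μ).mpr h).pos_of_inner_pos hpos
  have hdet : ∀ i, (T.restrict (hinv i)).det = ∏ μ ∈ s, μ ^ finrank ℝ ↥(E i ⊓ eigenspace T μ) :=
    fun i => by
      simp_rw [(hT.restrict_invariant (hinv i)).det_eq_prod_pow_finrank_eigenspace
        fun μ h => (hs μ).mp h.of_restrict, finrank_eigenspace_restrict]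
  calc ∏ i, (T.restrict (hinv i)).det ^ c i
      = ∏ i, ∏ μ ∈ s, μ ^ (c i * finrank ℝ ↥(E i ⊓ eigenspace T μ)) := by
        refine Finset.prod_congr rfl fun i _ => ?_
        rw [hdet, ← Real.finsetProd_rpow _ _ fun μ h => (pow_pos (hμ μ h) _).le]
        refine Finset.prod_congr rfl fun μ h => ?_
        rw [← Real.rpow_natCast, ← Real.rpow_mul (hμ μ h).le, mul_comm]
    _ = ∏ μ ∈ s, μ ^ (∑ i, c i * finrank ℝ ↥(E i ⊓ eigenspace T μ)) := by
        rw [Finset.prod_comm]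
        exact Finset.prod_congr rfl fun μ h => (Real.rpow_sum_of_pos (hμ μ h) _ _).symm
    _ = T.det := by
        rw [hT.det_eq_prod_pow_finrank_eigenspace fun μ => (hs μ).mp]
        refine Finset.prod_congr rfl fun μ h => ?_
        rw [hcrit μ ((hs μ).mpr h), Real.rpow_natCast]

end Critical

theorem stmt14 {n k : ℕ} (E : Fin k → Submodule ℝ (EuclideanSpace ℝ (Fin n)))
    (c : Fin k → ℝ) (hc : ∀ i, 0 < c i)
    (hBL : ∀ x : EuclideanSpace ℝ (Fin n),
      ∑ i, c i • (((E i).orthogonalProjectionOnto x : EuclideanSpace ℝ (Fin n))) = x)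
    (Φ : EuclideanSpace ℝ (Fin n) →ₗ[ℝ] EuclideanSpace ℝ (Fin n))
    (hsym : ∀ x y, (inner ℝ (Φ x) y : ℝ) = inner ℝ x (Φ y))
    (hpos : ∀ x, x ≠ 0 → 0 < (inner ℝ (Φ x) x : ℝ))
    (heig : ∀ μ : ℝ, Module.End.eigenspace Φ μ ≠ ⊥ →
      IsCritical E c (Module.End.eigenspace Φ μ)) :
    (∫ x : EuclideanSpace ℝ (Fin n),
        ⨆ p : {p : Fin k → EuclideanSpace ℝ (Fin n) //
            (∀ i, p i ∈ E i) ∧ x = ∑ i, c i • p i},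
          ∏ i, Real.exp (-(c i) * ‖Φ (p.1 i)‖ ^ 2)) =
      ∏ i, (∫ y : E i, Real.exp (-‖Φ (y : EuclideanSpace ℝ (Fin n))‖ ^ 2)) ^ c i := by
  have hT : Φ.IsSymmetric := hsym
  have hE : ∀ x, ∑ i, c i • (E i).starProjection x = x := hBL
  have hcrit : ∀ μ, HasEigenvalue Φ μ →
      ∑ i, c i * (finrank ℝ ↥(E i ⊓ eigenspace Φ μ) : ℝ) = finrank ℝ (eigenspace Φ μ) :=
    fun μ hμ => (heig μ (hasEigenvalue_iff.mp hμ)).2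
  have hinv := mapsTo_of_eigenspaces_critical hc hE hT hcrit
  have hdet : ∀ i, 0 < (Φ.restrict (hinv i)).det := fun i =>
    (hT.restrict_invariant (hinv i)).det_pos fun x hx => hpos x (by simpa using hx)
  have hfactor : ∀ i, ∫ y : E i, Real.exp (-‖Φ (y : EuclideanSpace ℝ (Fin n))‖ ^ 2) =
      Real.pi ^ (finrank ℝ (E i) / 2 : ℝ) / (Φ.restrict (hinv i)).det := fun i => by
    have hnorm : ∀ y : E i, ‖Φ.restrict (hinv i) y‖ = ‖Φ y‖ := fun y => by
      rw [← LinearMap.coe_restrict_apply (hinv i), Submodule.coe_norm]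
    simp_rw [← hnorm]
    exact integral_exp_neg_norm_sq_comp (hdet i)
  have hpi : ∏ i, (Real.pi ^ (finrank ℝ (E i) / 2 : ℝ)) ^ c i =
      Real.pi ^ (finrank ℝ (EuclideanSpace ℝ (Fin n)) / 2 : ℝ) := by
    simp_rw [← Real.rpow_mul Real.pi_pos.le, ← Real.rpow_sum_of_pos Real.pi_pos,
      ← sum_mul_finrank_eq_finrank hE, Finset.sum_div]
    exact congrArg _ (Finset.sum_congr rfl fun i _ => by ring)
  simp_rw [iSup_prod_exp_eq_exp (fun i => (hc i).le) hE hT hinv, hfactor,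
    Real.div_rpow (Real.rpow_pos_of_pos Real.pi_pos _).le (hdet _).le]
  rw [Finset.prod_div_distrib, hpi, prod_det_restrict_rpow_eq_det hT hpos hcrit hinv,
    integral_exp_neg_norm_sq_comp (hT.det_pos hpos)]
end

section
/- If a Gaussian probability density g and a positive Hölder-continuous probability density f on R^n satisfy f ≤ c·g for some constant c > 0, then the Brenier map T : R^n → R^n pushing forward the measure with density g to the measure with density f has linear growth, i.e., there is a constant C with ‖T(x)‖ ≤ C√(1+‖x‖²) for all x. -/
/-!
The Brenier map `T = ∇φ` is monotone: `0 ≤ ⟪T y - T x, y - x⟫`. Writing `R = ‖T x‖`,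
monotonicity forces `‖T z‖ ≥ R / 3` on the ball of radius `1 / 2` around `x + T x / R`. Since `g`
is a Gaussian, this ball has `g`-mass at least `exp (-O(‖x‖²))`; since `f ≤ c g`, the set
`{y | R / 3 ≤ ‖y‖}` it is mapped into has `f`-mass at most `exp (-Ω(R²))`. As `T` pushes one
measure to the other, comparing the two masses gives `R² = O(1 + ‖x‖²)`.
-/

open scoped BigOperators RealInnerProductSpace
open MeasureTheory

section ConvexGradient

open Set

variable {E : Type*} [NormedAddCommGroup E] [InnerProductSpace ℝ E] [CompleteSpace E]
  {φ : E → ℝ} {T : E → E}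

theorem HasGradientAt.hasDerivAt_add_smul {g x : E} (h : HasGradientAt φ g x) (v : E) :
    HasDerivAt (fun t : ℝ => φ (x + t • v)) ⟪g, v⟫ 0 := by
  have hline : HasDerivAt (fun t : ℝ => x + t • v) v 0 := by
    simpa using ((hasDerivAt_id (0 : ℝ)).smul_const v).const_add x
  have hφ : HasFDerivAt φ (InnerProductSpace.toDual ℝ E g) (x + (0 : ℝ) • v) := by
    simpa using h.hasFDerivAt
  have hcomp := hφ.comp_hasDerivAt (0 : ℝ) hline
  simp only [InnerProductSpace.toDual_apply_apply] at hcomp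
  exact hcomp

theorem ConvexOn.inner_le_sub_of_hasGradientAt (hφ : ConvexOn ℝ univ φ) {g x : E}
    (h : HasGradientAt φ g x) (y : E) : ⟪g, y - x⟫ ≤ φ y - φ x := by
  have hline : ConvexOn ℝ univ (φ ∘ AffineMap.lineMap (k := ℝ) x y) := by
    simpa using hφ.comp_affineMap (AffineMap.lineMap (k := ℝ) x y)
  have hderiv : HasDerivAt (φ ∘ AffineMap.lineMap (k := ℝ) x y) ⟪g, y - x⟫ 0 := by
    convert h.hasDerivAt_add_smul (y - x) using 2 with t
    simp [AffineMap.lineMap_apply, add_comm]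
  simpa [slope_def_field] using
    hline.le_slope_of_hasDerivAt (mem_univ 0) (mem_univ 1) one_pos hderiv

theorem ConvexOn.inner_sub_nonneg_of_hasGradientAt (hφ : ConvexOn ℝ univ φ)
    (hgrad : ∀ x, HasGradientAt φ (T x) x) (x y : E) : 0 ≤ ⟪T y - T x, y - x⟫ := by
  have hx := hφ.inner_le_sub_of_hasGradientAt (hgrad x) y
  have hy := hφ.inner_le_sub_of_hasGradientAt (hgrad y) x
  rw [← neg_sub y x, inner_neg_right] at hy
  rw [inner_sub_left]
  linarith

theorem measurable_of_hasGradientAt [MeasurableSpace E] [BorelSpace E]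
    (hgrad : ∀ x, HasGradientAt φ (T x) x) : Measurable T := by
  rw [← gradient_eq hgrad]
  exact (InnerProductSpace.toDual ℝ E).symm.continuous.measurable.comp (measurable_fderiv ℝ φ)

end ConvexGradient

section MonotoneMap

open Metric

variable {E : Type*} [NormedAddCommGroup E] [InnerProductSpace ℝ E] {T : E → E}

theorem norm_inv_norm_smul_le_one (v : E) : ‖‖v‖⁻¹ • v‖ ≤ 1 := by
  rw [norm_smul, norm_inv, norm_norm]
  exact inv_mul_le_one_of_le₀ le_rfl (norm_nonneg _)

theorem norm_div_three_le_norm_apply_of_monotone (hmono : ∀ x y, 0 ≤ ⟪T y - T x, y - x⟫)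
    (x : E) {z : E} (hz : z ∈ ball (x + ‖T x‖⁻¹ • T x) (1 / 2)) : ‖T x‖ / 3 ≤ ‖T z‖ := by
  set R := ‖T x‖
  set e := R⁻¹ • T x
  have hw : ‖z - (x + e)‖ < 1 / 2 := by rwa [mem_ball, dist_eq_norm] at hz
  have hsplit : z - x = e + (z - (x + e)) := by abel
  have he : ‖e‖ ≤ 1 := norm_inv_norm_smul_le_one (T x)
  have hTe : ⟪T x, e⟫ = R := by
    rw [real_inner_smul_right, real_inner_self_eq_norm_sq, sq, ← mul_assoc, inv_mul_mul_self]
  have hTx : R / 2 ≤ ⟪T x, z - x⟫ := by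
    rw [hsplit, inner_add_right, hTe]
    nlinarith [neg_abs_le ⟪T x, z - (x + e)⟫, abs_real_inner_le_norm (T x) (z - (x + e)),
      norm_nonneg (T x)]
  have hTz : ⟪T x, z - x⟫ ≤ ⟪T z, z - x⟫ := by
    have := hmono x z
    rw [inner_sub_left] at this
    linarith
  have hzx : ‖z - x‖ ≤ 3 / 2 := by
    rw [hsplit]
    linarith [norm_add_le e (z - (x + e))]
  nlinarith [real_inner_le_norm (T z) (z - x), norm_nonneg (T z)]

theorem measure_ball_le_map_norm_ge_of_monotone [MeasurableSpace E] [OpensMeasurableSpace E]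
    {μ ν : Measure E} (hmono : ∀ x y, 0 ≤ ⟪T y - T x, y - x⟫) (hT : Measurable T)
    (hpush : μ.map T = ν) (x : E) :
    μ (ball (x + ‖T x‖⁻¹ • T x) (1 / 2)) ≤ ν {y | ‖T x‖ / 3 ≤ ‖y‖} := by
  rw [← hpush, Measure.map_apply hT (measurableSet_le measurable_const measurable_norm)]
  exact measure_mono fun z hz => norm_div_three_le_norm_apply_of_monotone hmono x hz

end MonotoneMap

section QuadraticBounds

open Real

theorem exp_neg_mul_sq_norm_sub_le {E : Type*} [SeminormedAddCommGroup E] {m : ℝ} (hm : 0 ≤ m)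
    (y b : E) : exp (-m * ‖y - b‖ ^ 2) ≤ exp (m * ‖b‖ ^ 2) * exp (-(m / 2) * ‖y‖ ^ 2) := by
  rw [← exp_add, exp_le_exp]
  have hy : ‖y‖ ^ 2 ≤ (‖y - b‖ + ‖b‖) ^ 2 :=
    pow_le_pow_left₀ (norm_nonneg y) (norm_le_norm_sub_add y b) 2
  nlinarith [add_sq_le (a := ‖y - b‖) (b := ‖b‖)]

theorem exp_neg_two_mul_sq_norm_le {E : Type*} [SeminormedAddCommGroup E] {M : ℝ} (hM : 0 ≤ M)
    (z b : E) : exp (-(2 * M) * ‖b‖ ^ 2) * exp (-(2 * M) * ‖z‖ ^ 2) ≤ exp (-M * ‖z - b‖ ^ 2) := by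
  rw [← exp_add, exp_le_exp]
  have hz : ‖z - b‖ ^ 2 ≤ (‖z‖ + ‖b‖) ^ 2 :=
    pow_le_pow_left₀ (norm_nonneg _) (norm_sub_le z b) 2
  nlinarith [add_sq_le (a := ‖z‖) (b := ‖b‖)]

variable {E : Type*} [NormedAddCommGroup E] [InnerProductSpace ℝ E] [FiniteDimensional ℝ E]

theorem LinearMap.exists_pos_mul_sq_norm_le_inner_map_self (A : E →ₗ[ℝ] E)
    (hA : ∀ x, x ≠ 0 → 0 < ⟪A x, x⟫) : ∃ m, 0 < m ∧ ∀ w, m * ‖w‖ ^ 2 ≤ ⟪A w, w⟫ := by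
  obtain ⟨m, hm, hmin⟩ := (isCompact_sphere (0 : E) 1).exists_forall_le'
    (A.continuous_of_finiteDimensional.inner continuous_id').continuousOn
    fun u hu => hA u (by rintro rfl; simp at hu)
  refine ⟨m, hm, fun w => ?_⟩
  rcases eq_or_ne w 0 with rfl | hw
  · simp
  have hu := hmin (‖w‖⁻¹ • w) (by simp [norm_smul, hw])
  rw [map_smul, real_inner_smul_left, real_inner_smul_right] at hu
  have hw' : 0 < ‖w‖ := norm_pos_iff.2 hw
  calc m * ‖w‖ ^ 2 ≤ ‖w‖⁻¹ * (‖w‖⁻¹ * ⟪A w, w⟫) * ‖w‖ ^ 2 := by gcongr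
    _ = ⟪A w, w⟫ := by field_simp

theorem LinearMap.exists_inner_map_self_le_mul_sq_norm (A : E →ₗ[ℝ] E) :
    ∃ M, 0 ≤ M ∧ ∀ w, ⟪A w, w⟫ ≤ M * ‖w‖ ^ 2 := by
  refine ⟨‖LinearMap.toContinuousLinearMap A‖, norm_nonneg _, fun w => ?_⟩
  calc ⟪A w, w⟫ ≤ ‖A w‖ * ‖w‖ := real_inner_le_norm _ _
    _ ≤ ‖LinearMap.toContinuousLinearMap A‖ * ‖w‖ * ‖w‖ := by
      gcongr
      exact (LinearMap.toContinuousLinearMap A).le_opNorm w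
    _ = ‖LinearMap.toContinuousLinearMap A‖ * ‖w‖ ^ 2 := by ring

end QuadraticBounds

section RealInequalities

open Real

theorem mul_le_log_add_of_mul_exp_le {α β κ M s R : ℝ} (hα : 0 < α)
    (h : α * exp (-M * s) ≤ β * exp (-κ * R)) : κ * R ≤ log (β / α) + M * s := by
  have hlhs : 0 < α * exp (-M * s) := by positivity
  have hβ : 0 < β := (mul_pos_iff_of_pos_right (exp_pos _)).1 (hlhs.trans_le h)
  have hlog := log_le_log hlhs h
  rw [log_mul hα.ne' (exp_pos _).ne', log_mul hβ.ne' (exp_pos _).ne', log_exp, log_exp] at hlog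
  rw [log_div hβ.ne' hα.ne']
  linarith

theorem exists_pos_le_mul_sqrt_one_add_sq {X : Type*} {u v : X → ℝ} {a b : ℝ}
    (h : ∀ x, u x ^ 2 ≤ a + b * v x ^ 2) : ∃ C : ℝ, 0 < C ∧ ∀ x, u x ≤ C * √(1 + v x ^ 2) := by
  refine ⟨√(|a| + |b| + 1), by positivity, fun x => ?_⟩
  rw [← sqrt_mul (by positivity)]
  refine (le_abs_self _).trans (abs_le_sqrt ?_)
  nlinarith [h x, le_abs_self a, abs_nonneg a, abs_nonneg b, sq_nonneg (v x),
    mul_le_mul_of_nonneg_right (le_abs_self b) (sq_nonneg (v x))]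

end RealInequalities

section GaussianBounds

open Metric Real

variable {E : Type*} [NormedAddCommGroup E] [InnerProductSpace ℝ E] [FiniteDimensional ℝ E]
  [MeasurableSpace E] [BorelSpace E]

theorem integrable_exp_neg_mul_sq_norm {m : ℝ} (hm : 0 < m) :
    Integrable (fun y : E => exp (-m * ‖y‖ ^ 2)) := by
  refine (GaussianFourier.integrable_cexp_neg_mul_sq_norm_add (V := E) (b := m)
    (by simpa using hm) 0 0).norm.congr (Filter.Eventually.of_forall fun y => ?_)
  dsimp only
  rw [Complex.norm_exp]
  norm_cast
  simp

theorem withDensity_ball_ge_of_le_density {g : E → ℝ} {α M s : ℝ} (hα : 0 ≤ α) (hM : 0 ≤ M)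
    (hg : ∀ z, α * exp (-M * ‖z‖ ^ 2) ≤ g z) {p : E} {r : ℝ} (hs : ‖p‖ + r ≤ s) :
    ENNReal.ofReal (α * exp (-M * s ^ 2)) * volume (ball (0 : E) r) ≤
      volume.withDensity (fun z => ENNReal.ofReal (g z)) (ball p r) := by
  rw [withDensity_apply _ measurableSet_ball, ← Measure.addHaar_ball_center volume p,
    ← setLIntegral_const]
  refine setLIntegral_mono' measurableSet_ball fun z hz => ENNReal.ofReal_le_ofReal ?_
  have hzs : ‖z‖ ^ 2 ≤ s ^ 2 := by
    rw [mem_ball, dist_eq_norm] at hz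
    exact pow_le_pow_left₀ (norm_nonneg z) (by linarith [norm_le_norm_add_norm_sub' z p]) 2
  refine le_trans (mul_le_mul_of_nonneg_left (exp_le_exp.2 ?_) hα) (hg z)
  nlinarith

theorem withDensity_norm_ge_le_of_density_le {f : E → ℝ} {β m ρ : ℝ} (hβ : 0 ≤ β) (hm : 0 ≤ m)
    (hρ : 0 ≤ ρ) (hf : ∀ y, f y ≤ β * exp (-m * ‖y‖ ^ 2)) :
    volume.withDensity (fun y => ENNReal.ofReal (f y)) {y | ρ ≤ ‖y‖} ≤
      ENNReal.ofReal (β * exp (-(m / 2) * ρ ^ 2)) *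
        ∫⁻ y : E, ENNReal.ofReal (exp (-(m / 2) * ‖y‖ ^ 2)) := by
  have hS : MeasurableSet {y : E | ρ ≤ ‖y‖} := measurableSet_le measurable_const measurable_norm
  rw [withDensity_apply _ hS, ← lintegral_const_mul' _ _ ENNReal.ofReal_ne_top]
  refine (setLIntegral_mono' hS fun y hy => ?_).trans (setLIntegral_le_lintegral _ _)
  rw [← ENNReal.ofReal_mul (by positivity)]
  refine ENNReal.ofReal_le_ofReal ((hf y).trans ?_)
  have hy : ρ ^ 2 ≤ ‖y‖ ^ 2 := pow_le_pow_left₀ hρ hy 2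
  rw [mul_assoc, ← exp_add]
  gcongr
  nlinarith

end GaussianBounds

section LinearGrowth

open Metric Real

variable {E : Type*} [NormedAddCommGroup E] [InnerProductSpace ℝ E] [FiniteDimensional ℝ E]
  [MeasurableSpace E] [BorelSpace E]

theorem exists_linear_growth_of_monotone_of_map_withDensity {f g : E → ℝ} {T : E → E}
    {α β M m : ℝ} (hα : 0 < α) (hβ : 0 ≤ β) (hM : 0 ≤ M) (hm : 0 < m)
    (hg : ∀ z, α * exp (-M * ‖z‖ ^ 2) ≤ g z) (hf : ∀ y, f y ≤ β * exp (-m * ‖y‖ ^ 2))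
    (hmono : ∀ x y, 0 ≤ ⟪T y - T x, y - x⟫) (hT : Measurable T)
    (hpush : (volume.withDensity fun z => ENNReal.ofReal (g z)).map T =
      volume.withDensity fun y => ENNReal.ofReal (f y)) :
    ∃ C : ℝ, 0 < C ∧ ∀ x, ‖T x‖ ≤ C * √(1 + ‖x‖ ^ 2) := by
  set V := volume (ball (0 : E) (1 / 2))
  set I := ∫⁻ y : E, ENNReal.ofReal (exp (-(m / 2) * ‖y‖ ^ 2))
  have hV : 0 < V.toReal :=
    ENNReal.toReal_pos (measure_ball_pos _ _ (by norm_num)).ne' measure_ball_lt_top.ne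
  have hI : I ≠ ⊤ := (integrable_exp_neg_mul_sq_norm (half_pos hm)).lintegral_lt_top.ne
  have hcenter : ∀ x : E, ‖x + ‖T x‖⁻¹ • T x‖ + 1 / 2 ≤ ‖x‖ + 3 / 2 := fun x => by
    linarith [norm_add_le x (‖T x‖⁻¹ • T x), norm_inv_norm_smul_le_one (T x)]
  have hmass : ∀ x, ENNReal.ofReal (α * exp (-M * (‖x‖ + 3 / 2) ^ 2)) * V ≤
      ENNReal.ofReal (β * exp (-(m / 2) * (‖T x‖ / 3) ^ 2)) * I := fun x =>
    calc _ ≤ _ := withDensity_ball_ge_of_le_density hα.le hM hg (hcenter x)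
      _ ≤ _ := measure_ball_le_map_norm_ge_of_monotone hmono hT hpush x
      _ ≤ _ := withDensity_norm_ge_le_of_density_le hβ hm.le (by positivity) hf
  set L := log (β * I.toReal / (α * V.toReal))
  refine exists_pos_le_mul_sqrt_one_add_sq (u := fun x => ‖T x‖) (v := norm)
    (a := (18 * L + 81 * M) / m) (b := 36 * M / m) fun x => ?_
  have hreal := ENNReal.toReal_mono (ENNReal.mul_ne_top ENNReal.ofReal_ne_top hI) (hmass x)
  rw [ENNReal.toReal_mul, ENNReal.toReal_mul, ENNReal.toReal_ofReal (by positivity),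
    ENNReal.toReal_ofReal (by positivity)] at hreal
  have hlog := mul_le_log_add_of_mul_exp_le (mul_pos hα hV)
    (by linarith : α * V.toReal * exp (-M * (‖x‖ + 3 / 2) ^ 2) ≤
      β * I.toReal * exp (-(m / 2) * (‖T x‖ / 3) ^ 2))
  have hsq : m * ‖T x‖ ^ 2 ≤ 18 * L + 81 * M + 36 * M * ‖x‖ ^ 2 := by
    nlinarith [add_sq_le (a := ‖x‖) (b := (3 / 2 : ℝ))]
  calc ‖T x‖ ^ 2 = m * ‖T x‖ ^ 2 / m := by field_simp
    _ ≤ (18 * L + 81 * M + 36 * M * ‖x‖ ^ 2) / m := by gcongr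
    _ = (18 * L + 81 * M) / m + 36 * M / m * ‖x‖ ^ 2 := by ring

end LinearGrowth

theorem stmt16_general {n : ℕ} (f g : EuclideanSpace ℝ (Fin n) → ℝ)
    -- `g` is a Gaussian probability density
    (hgauss : ∃ (A : EuclideanSpace ℝ (Fin n) →ₗ[ℝ] EuclideanSpace ℝ (Fin n))
        (b : EuclideanSpace ℝ (Fin n)) (C : ℝ),
      (∀ x y, (inner ℝ (A x) y : ℝ) = inner ℝ x (A y)) ∧
      (∀ x, x ≠ 0 → 0 < (inner ℝ (A x) x : ℝ)) ∧
      (∀ x, g x = C * Real.exp (-(inner ℝ (A (x - b)) (x - b) : ℝ))))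
    (hgprob : ∫ x, g x = 1)
    -- domination `f ≤ c • g`
    (c : ℝ) (hc : 0 < c) (hdom : ∀ x, f x ≤ c * g x)
    -- `T` is the Brenier map pushing the measure with density `g` forward
    -- to the measure with density `f`: the gradient of a convex potential
    (T : EuclideanSpace ℝ (Fin n) → EuclideanSpace ℝ (Fin n))
    (φ : EuclideanSpace ℝ (Fin n) → ℝ) (hφ : ConvexOn ℝ Set.univ φ)
    (hgrad : ∀ x, HasGradientAt φ (T x) x)
    (hpush : Measure.map T (volume.withDensity fun x => ENNReal.ofReal (g x)) =
      volume.withDensity fun x => ENNReal.ofReal (f x)) :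
    ∃ C : ℝ, 0 < C ∧ ∀ x, ‖T x‖ ≤ C * Real.sqrt (1 + ‖x‖ ^ 2) := by
  obtain ⟨A, b, C, -, hA, hg⟩ := hgauss
  have hC : 0 < C := by
    by_contra! hC
    have : ∫ x, g x ≤ 0 := integral_nonpos fun x => by
      rw [hg x]
      exact mul_nonpos_of_nonpos_of_nonneg hC (Real.exp_pos _).le
    linarith
  obtain ⟨m, hm, hmA⟩ := A.exists_pos_mul_sq_norm_le_inner_map_self hA
  obtain ⟨M, hM, hAM⟩ := A.exists_inner_map_self_le_mul_sq_norm
  have hg_lower : ∀ z, C * Real.exp (-(2 * M) * ‖b‖ ^ 2) * Real.exp (-(2 * M) * ‖z‖ ^ 2) ≤ g z :=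
    fun z => by
      rw [hg, mul_assoc]
      gcongr
      exact (exp_neg_two_mul_sq_norm_le hM z b).trans
        (Real.exp_le_exp.2 (by linarith [hAM (z - b)]))
  have hf_upper : ∀ y, f y ≤ c * C * Real.exp (m * ‖b‖ ^ 2) * Real.exp (-(m / 2) * ‖y‖ ^ 2) :=
    fun y => by
      refine (hdom y).trans ?_
      rw [hg, mul_assoc, mul_assoc]
      gcongr
      exact (Real.exp_le_exp.2 (by linarith [hmA (y - b)])).trans
        (exp_neg_mul_sq_norm_sub_le hm.le y b)
  exact exists_linear_growth_of_monotone_of_map_withDensity (by positivity) (by positivity)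
    (by positivity) (half_pos hm) hg_lower hf_upper
    (hφ.inner_sub_nonneg_of_hasGradientAt hgrad) (measurable_of_hasGradientAt hgrad) hpush

theorem stmt16 {n : ℕ} (f g : EuclideanSpace ℝ (Fin n) → ℝ)
    -- `g` is a Gaussian probability density
    (hgauss : ∃ (A : EuclideanSpace ℝ (Fin n) →ₗ[ℝ] EuclideanSpace ℝ (Fin n))
        (b : EuclideanSpace ℝ (Fin n)) (C : ℝ),
      (∀ x y, (inner ℝ (A x) y : ℝ) = inner ℝ x (A y)) ∧
      (∀ x, x ≠ 0 → 0 < (inner ℝ (A x) x : ℝ)) ∧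
      (∀ x, g x = C * Real.exp (-(inner ℝ (A (x - b)) (x - b) : ℝ))))
    (hgprob : ∫ x, g x = 1)
    -- `f` is a positive Hölder-continuous probability density
    (hfpos : ∀ x, 0 < f x) (hfprob : ∫ x, f x = 1)
    (hHolder : ∃ α : ℝ, 0 < α ∧ α < 1 ∧ ∀ x₀, ∃ U ∈ nhds x₀, ∃ c₀ > (0:ℝ),
      ∀ x ∈ U, ∀ y ∈ U, |f x - f y| ≤ c₀ * ‖x - y‖ ^ α)
    -- domination `f ≤ c • g`
    (c : ℝ) (hc : 0 < c) (hdom : ∀ x, f x ≤ c * g x)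
    -- `T` is the Brenier map pushing the measure with density `g` forward
    -- to the measure with density `f`: the gradient of a convex potential
    (T : EuclideanSpace ℝ (Fin n) → EuclideanSpace ℝ (Fin n))
    (φ : EuclideanSpace ℝ (Fin n) → ℝ) (hφ : ConvexOn ℝ Set.univ φ)
    (hgrad : ∀ x, HasGradientAt φ (T x) x)
    (hpush : Measure.map T (volume.withDensity fun x => ENNReal.ofReal (g x)) =
      volume.withDensity fun x => ENNReal.ofReal (f x)) :
    ∃ C : ℝ, 0 < C ∧ ∀ x, ‖T x‖ ≤ C * Real.sqrt (1 + ‖x‖ ^ 2) :=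
  stmt16_general f g hgauss hgprob c hc hdom T φ hφ hgrad hpush
end

section
/- Let θ be a measurable function of polynomial growth on R^n such that θ(x) = ω(P_E x) for a linear subspace E with 1 ≤ dim E ≤ n−1 and some function ω on E. Then the support of the Fourier transform of θ (as a tempered distribution) is contained in E. -/
open scoped BigOperators
open MeasureTheory

open FourierTransform Module Complex Real

local notation "⟪" x ", " y "⟫" => @inner ℝ _ _ x y

lemma schwartz_decay_bound {V : Type*} [NormedAddCommGroup V] [NormedSpace ℝ (EuclideanSpace ℝ (Fin n))]
    (ψ : SchwartzMap (EuclideanSpace ℝ (Fin n)) ℂ) (d : ℕ) :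
    ∃ C : ℝ, 0 ≤ C ∧ ∀ x, (1 + ‖x‖) ^ d * ‖ψ x‖ ≤ C := by
  refine ⟨2 ^ d * ((Finset.Iic (d, 0)).sup fun p => SchwartzMap.seminorm ℝ p.1 p.2) ψ,
    mul_nonneg (by positivity) (apply_nonneg _ _), fun x => ?_⟩
  have h := SchwartzMap.one_add_le_sup_seminorm_apply (𝕜 := ℝ) (m := (d, 0))
    le_rfl le_rfl ψ x
  simpa [norm_iteratedFDeriv_zero] using h

set_option maxHeartbeats 2000000 in
theorem stmt17 {n : ℕ} (θ : EuclideanSpace ℝ (Fin n) → ℂ)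
    (hmeas : Measurable θ)
    (hpoly : ∃ (C : ℝ) (m : ℕ), ∀ x, ‖θ x‖ ≤ C * (1 + ‖x‖) ^ m)
    (E : Submodule ℝ (EuclideanSpace ℝ (Fin n)))
    (hE1 : 1 ≤ Module.finrank ℝ E) (hE2 : Module.finrank ℝ E ≤ n - 1)
    (ω : E → ℂ) (hθ : ∀ x, θ x = ω (E.orthogonalProjection x)) :
    -- the support of the Fourier transform of `θ` (as a tempered distribution)
    -- is contained in `E`: `⟨θ̂, φ⟩ = ⟨θ, φ̂⟩ = 0` for every test function `φ`
    -- supported away from `E`.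
    ∀ φ : EuclideanSpace ℝ (Fin n) → ℂ, ContDiff ℝ (⊤ : ℕ∞) φ → HasCompactSupport φ →
      tsupport φ ⊆ ((E : Set (EuclideanSpace ℝ (Fin n))))ᶜ →
      (∫ x, θ x *
        (∫ y, φ y * Complex.exp (-2 * Real.pi * ((inner ℝ x y : ℝ) : ℂ) * Complex.I))) = 0 := by
  intro φ hφ1 hφ2 hφ3
  classical
  obtain ⟨C₀, m₀, hC₀⟩ := hpoly
  have hC₀0 : 0 ≤ C₀ := by
    have h1 := (norm_nonneg (θ 0)).trans (hC₀ 0)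
    simpa using h1
  -- dimensions
  set k : ℕ := Module.finrank ℝ E with hkdef
  set m : ℕ := Module.finrank ℝ Eᗮ with hmdef
  have hdim : k + m = n := by
    rw [hkdef, hmdef, Submodule.finrank_add_finrank_orthogonal, finrank_euclideanSpace_fin]
  haveI : Nonempty (Fin k ⊕ Fin m) := ⟨Sum.inl ⟨0, hE1⟩⟩
  -- the adapted orthonormal basis of V
  set bE := stdOrthonormalBasis ℝ E with hbE
  set bF := stdOrthonormalBasis ℝ Eᗮ with hbF
  set w : Fin k ⊕ Fin m → (EuclideanSpace ℝ (Fin n)) :=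
    Sum.elim (fun i => (bE i : (EuclideanSpace ℝ (Fin n)))) (fun j => (bF j : (EuclideanSpace ℝ (Fin n)))) with hw
  have horth : Orthonormal ℝ w := by
    constructor
    · intro s
      cases s with
      | inl i => exact bE.orthonormal.1 i
      | inr j => exact bF.orthonormal.1 j
    · intro s t hst
      cases s with
      | inl i =>
        cases t with
        | inl i' =>
          have hne : i ≠ i' := by rintro rfl; exact hst rfl
          simpa [hw, Submodule.coe_inner] using bE.orthonormal.2 hne
        | inr j =>
          exact Submodule.inner_right_of_mem_orthogonal (SetLike.coe_mem (bE i))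
            (SetLike.coe_mem (bF j))
      | inr j =>
        cases t with
        | inl i =>
          rw [show w (Sum.inr j) = (bF j : EuclideanSpace ℝ (Fin n)) from rfl,
            show w (Sum.inl i) = (bE i : EuclideanSpace ℝ (Fin n)) from rfl, real_inner_comm]
          exact Submodule.inner_right_of_mem_orthogonal (SetLike.coe_mem (bE i))
            (SetLike.coe_mem (bF j))
        | inr j' =>
          have hne : j ≠ j' := by rintro rfl; exact hst rfl
          simpa [hw, Submodule.coe_inner] using bF.orthonormal.2 hne
  have hcard : Fintype.card (Fin k ⊕ Fin m) = finrank ℝ (EuclideanSpace ℝ (Fin n)) := by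
    simp [hdim, finrank_euclideanSpace_fin]
  set bV : OrthonormalBasis (Fin k ⊕ Fin m) ℝ (EuclideanSpace ℝ (Fin n)) :=
    (basisOfOrthonormalOfCardEqFinrank horth hcard).toOrthonormalBasis
      (by rwa [coe_basisOfOrthonormalOfCardEqFinrank]) with hbV
  have hbVs : ∀ s, bV s = w s := by
    intro s
    rw [hbV, Basis.coe_toOrthonormalBasis, coe_basisOfOrthonormalOfCardEqFinrank]
  -- the product basis and the isometry
  set Bstd : OrthonormalBasis (Fin k ⊕ Fin m) ℝ (WithLp 2 (EuclideanSpace ℝ (Fin k) × EuclideanSpace ℝ (Fin m))) :=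
    (EuclideanSpace.basisFun (Fin k) ℝ).prod (EuclideanSpace.basisFun (Fin m) ℝ) with hBstd
  set L : WithLp 2 (EuclideanSpace ℝ (Fin k) × EuclideanSpace ℝ (Fin m)) ≃ₗᵢ[ℝ] (EuclideanSpace ℝ (Fin n)) := Bstd.repr.trans bV.repr.symm with hL
  set Teq : (EuclideanSpace ℝ (Fin k) × EuclideanSpace ℝ (Fin m)) ≃ₜ (EuclideanSpace ℝ (Fin n)) :=
    ((WithLp.prodContinuousLinearEquiv 2 ℝ (EuclideanSpace ℝ (Fin k)) (EuclideanSpace ℝ (Fin m))).symm.toHomeomorph).trans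
      L.toHomeomorph with hTeq
  set T : EuclideanSpace ℝ (Fin k) × EuclideanSpace ℝ (Fin m) → (EuclideanSpace ℝ (Fin n)) := ⇑Teq with hT
  have hTdef : ∀ p : EuclideanSpace ℝ (Fin k) × EuclideanSpace ℝ (Fin m), T p = L ((WithLp.equiv 2 (EuclideanSpace ℝ (Fin k) × EuclideanSpace ℝ (Fin m))).symm p) := fun p => rfl
  -- the coordinates of `Bstd.repr`
  have hBrepr : ∀ (p : EuclideanSpace ℝ (Fin k) × EuclideanSpace ℝ (Fin m)) (s : Fin k ⊕ Fin m),
      Bstd.repr ((WithLp.equiv 2 (EuclideanSpace ℝ (Fin k) × EuclideanSpace ℝ (Fin m))).symm p) s = Sum.elim (p.1 : Fin k → ℝ) p.2 s := by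
    intro p s
    rw [OrthonormalBasis.repr_apply_apply]
    cases s with
    | inl i =>
      rw [show Bstd (Sum.inl i) = ((WithLp.equiv 2 _).symm
        ((EuclideanSpace.basisFun (Fin k) ℝ) i, 0)) from by
          simp [hBstd, OrthonormalBasis.prod_apply]]
      rw [WithLp.prod_inner_apply]
      simp [EuclideanSpace.basisFun_apply, EuclideanSpace.inner_single_left]
    | inr j =>
      rw [show Bstd (Sum.inr j) = ((WithLp.equiv 2 _).symm
        (0, (EuclideanSpace.basisFun (Fin m) ℝ) j)) from by
          simp [hBstd, OrthonormalBasis.prod_apply]]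
      rw [WithLp.prod_inner_apply]
      simp [EuclideanSpace.basisFun_apply, EuclideanSpace.inner_single_left]
  -- T as a sum
  have hTsum : ∀ p : EuclideanSpace ℝ (Fin k) × EuclideanSpace ℝ (Fin m),
      T p = (∑ i, p.1 i • (bE i : (EuclideanSpace ℝ (Fin n)))) + ∑ j, p.2 j • (bF j : (EuclideanSpace ℝ (Fin n))) := by
    intro p
    have h1 : T p = bV.repr.symm (Bstd.repr ((WithLp.equiv 2 (EuclideanSpace ℝ (Fin k) × EuclideanSpace ℝ (Fin m))).symm p)) := rfl
    rw [h1, ← OrthonormalBasis.sum_repr_symm, Fintype.sum_sum_type]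
    congr 1
    · refine Finset.sum_congr rfl fun i _ => ?_
      rw [hBrepr, hbVs]
      rfl
    · refine Finset.sum_congr rfl fun j _ => ?_
      rw [hBrepr, hbVs]
      rfl
  -- membership facts
  have hmem1 : ∀ a : EuclideanSpace ℝ (Fin k), T (a, 0) ∈ E := by
    intro a
    rw [hTsum]
    simp only [Prod.fst, Prod.snd]
    have h2 : (∑ j, (0 : EuclideanSpace ℝ (Fin m)) j • (bF j : (EuclideanSpace ℝ (Fin n)))) = 0 := by simp
    rw [h2, add_zero]
    exact Submodule.sum_mem E fun i _ => Submodule.smul_mem E _ (SetLike.coe_mem (bE i))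
  have hmem2 : ∀ (a : EuclideanSpace ℝ (Fin k)) (c : EuclideanSpace ℝ (Fin m)), T (a, c) - T (a, 0) ∈ Eᗮ := by
    intro a c
    rw [hTsum, hTsum]
    have h2 : (∑ j, (0 : EuclideanSpace ℝ (Fin m)) j • (bF j : (EuclideanSpace ℝ (Fin n)))) = 0 := by simp
    simp only [h2, add_zero, add_sub_cancel_left]
    exact Submodule.sum_mem Eᗮ fun j _ => Submodule.smul_mem Eᗮ _ (SetLike.coe_mem (bF j))
  -- inner products
  have hT_inner : ∀ p q : EuclideanSpace ℝ (Fin k) × EuclideanSpace ℝ (Fin m), ⟪T p, T q⟫ = ⟪p.1, q.1⟫ + ⟪p.2, q.2⟫ := by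
    intro p q
    rw [hTdef, hTdef, LinearIsometryEquiv.inner_map_map]
    exact WithLp.prod_inner_apply _ _
  have hT_norm : ∀ p : EuclideanSpace ℝ (Fin k) × EuclideanSpace ℝ (Fin m), ‖p.2‖ ≤ ‖T p‖ := by
    intro p
    have h1 : ⟪T p, T p⟫ = ⟪p.1, p.1⟫ + ⟪p.2, p.2⟫ := hT_inner p p
    rw [real_inner_self_eq_norm_sq, real_inner_self_eq_norm_sq, real_inner_self_eq_norm_sq] at h1
    nlinarith [norm_nonneg (T p), norm_nonneg p.2, sq_nonneg ‖p.1‖]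
  -- measure preservation
  have hTmp : MeasurePreserving T volume volume := by
    have hchain : MeasurePreserving
        (fun p : EuclideanSpace ℝ (Fin k) × EuclideanSpace ℝ (Fin m) => bV.repr.symm
          ((WithLp.equiv 2 ((Fin k ⊕ Fin m) → ℝ)).symm
            ((MeasurableEquiv.sumPiEquivProdPi (fun _ : Fin k ⊕ Fin m => ℝ)).symm
              (Prod.map (WithLp.equiv 2 (Fin k → ℝ)) (WithLp.equiv 2 (Fin m → ℝ)) p))))
        volume volume :=
      (bV.measurePreserving_repr_symm).comp
        ((PiLp.volume_preserving_toLp ((Fin k ⊕ Fin m))).comp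
          ((volume_measurePreserving_sumPiEquivProdPi_symm (fun _ : Fin k ⊕ Fin m => ℝ)).comp
            ((EuclideanSpace.volume_preserving_symm_measurableEquiv_toLp (Fin k)).prod
              (EuclideanSpace.volume_preserving_symm_measurableEquiv_toLp (Fin m)))))
    have heq : T = (fun p : EuclideanSpace ℝ (Fin k) × EuclideanSpace ℝ (Fin m) => bV.repr.symm
          ((WithLp.equiv 2 ((Fin k ⊕ Fin m) → ℝ)).symm
            ((MeasurableEquiv.sumPiEquivProdPi (fun _ : Fin k ⊕ Fin m => ℝ)).symm
              (Prod.map (WithLp.equiv 2 (Fin k → ℝ)) (WithLp.equiv 2 (Fin m → ℝ)) p)))) := by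
      funext p
      have h1 : T p = bV.repr.symm (Bstd.repr ((WithLp.equiv 2 (EuclideanSpace ℝ (Fin k) × EuclideanSpace ℝ (Fin m))).symm p)) := rfl
      rw [h1]
      congr 1
    rw [heq]
    exact hchain
  have Temb : MeasurableEmbedding T := Teq.measurableEmbedding
  -- Schwartz function machinery
  set φS : SchwartzMap (EuclideanSpace ℝ (Fin n)) ℂ :=
    { toFun := φ
      smooth' := hφ1.of_le (by simp)
      decay' := by
        intro k' n'
        have hcont : Continuous fun x => ‖x‖ ^ k' * ‖iteratedFDeriv ℝ n' φ x‖ :=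
          (continuous_norm.pow k').mul (hφ1.continuous_iteratedFDeriv (by exact_mod_cast le_top)).norm
        have hcs : HasCompactSupport fun x => ‖x‖ ^ k' * ‖iteratedFDeriv ℝ n' φ x‖ :=
          HasCompactSupport.mul_left (hφ2.iteratedFDeriv n').norm
        obtain ⟨C, hC⟩ := hcont.bounded_above_of_compact_support hcs
        exact ⟨C, fun x => (le_abs_self _).trans ((Real.norm_eq_abs _) ▸ hC x)⟩ } with hφS
  set ψ : SchwartzMap (EuclideanSpace ℝ (Fin n)) ℂ := SchwartzMap.fourierTransformCLM ℝ φS with hψdef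
  have hψx : ∀ x, ψ x = 𝓕 φ x := by
    intro x
    rw [hψdef]
    rw [show ((SchwartzMap.fourierTransformCLM ℝ φS)) = 𝓕 φS from
      SchwartzMap.fourierTransformCLM_apply ℝ φS]
    rfl
  -- φ vanishes on E
  have hφE : ∀ x : EuclideanSpace ℝ (Fin n), x ∈ E → φ x = 0 := by
    intro x hx
    by_contra h
    have hxt : x ∈ tsupport φ := subset_tsupport φ (by simpa using h)
    exact (hφ3 hxt) hx
  -- the integrand equals θ * ψ
  have hinner : ∀ x : EuclideanSpace ℝ (Fin n),
      (∫ y, φ y * Complex.exp (-2 * Real.pi * ((inner ℝ x y : ℝ) : ℂ) * Complex.I)) = ψ x := by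
    intro x
    rw [hψx, Real.fourier_eq']
    refine integral_congr_ae (Filter.Eventually.of_forall fun y => ?_)
    simp only [smul_eq_mul]
    rw [real_inner_comm y x]
    push_cast
    ring
  -- integrability of θ * ψ
  have hθψ_int : Integrable (fun x => θ x * ψ x) volume := by
    obtain ⟨Cψ, hCψ0, hCψ⟩ := schwartz_decay_bound (V := EuclideanSpace ℝ (Fin n)) ψ (m₀ + (n + 1))
    have hbound : Integrable (fun x : (EuclideanSpace ℝ (Fin n)) => C₀ * Cψ * (1 + ‖x‖) ^ (-((n : ℝ) + 1))) volume := by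
      refine (integrable_one_add_norm ?_).const_mul _
      rw [finrank_euclideanSpace_fin]
      norm_num
    refine hbound.mono' (hmeas.aestronglyMeasurable.mul ψ.continuous.aestronglyMeasurable)
      (Filter.Eventually.of_forall fun x => ?_)
    have ht : (0 : ℝ) < 1 + ‖x‖ := by positivity
    have h2 : (1 + ‖x‖) ^ m₀ * ‖ψ x‖ ≤ Cψ / (1 + ‖x‖) ^ (n + 1) := by
      rw [le_div_iff₀ (by positivity)]
      calc (1 + ‖x‖) ^ m₀ * ‖ψ x‖ * (1 + ‖x‖) ^ (n + 1)
          = (1 + ‖x‖) ^ (m₀ + (n + 1)) * ‖ψ x‖ := by ring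
        _ ≤ Cψ := hCψ x
    have h3 : ‖θ x * ψ x‖ ≤ C₀ * (Cψ / (1 + ‖x‖) ^ (n + 1)) := by
      rw [norm_mul]
      calc ‖θ x‖ * ‖ψ x‖ ≤ (C₀ * (1 + ‖x‖) ^ m₀) * ‖ψ x‖ :=
            mul_le_mul_of_nonneg_right (hC₀ x) (norm_nonneg _)
        _ = C₀ * ((1 + ‖x‖) ^ m₀ * ‖ψ x‖) := by ring
        _ ≤ C₀ * (Cψ / (1 + ‖x‖) ^ (n + 1)) := mul_le_mul_of_nonneg_left h2 hC₀0
    refine h3.trans (le_of_eq ?_)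
    rw [Real.rpow_neg ht.le]
    rw [show ((n : ℝ) + 1) = ((n + 1 : ℕ) : ℝ) by push_cast; ring]
    rw [Real.rpow_natCast]
    ring
  -- θ ∘ T depends only on the first coordinate
  have hθT : ∀ p : EuclideanSpace ℝ (Fin k) × EuclideanSpace ℝ (Fin m), θ (T p) = θ (T (p.1, 0)) := by
    intro p
    have h0 := Submodule.orthogonalProjectionOnto_apply_of_mem_orthogonal (hmem2 p.1 p.2)
    rw [map_sub, sub_eq_zero] at h0
    rw [hθ, hθ]
    exact congrArg ω h0
  -- the key vanishing of the partial integral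
  have hkey : ∀ a : EuclideanSpace ℝ (Fin k), (∫ c : EuclideanSpace ℝ (Fin m), ψ (T (a, c))) = 0 := by
    intro a
    set g : EuclideanSpace ℝ (Fin m) → ℂ := fun v => ∫ u : EuclideanSpace ℝ (Fin k),
      φ (T (u, v)) * Complex.exp ((↑(-2 * Real.pi * ⟪u, a⟫) : ℂ) * Complex.I) with hg
    -- compact support of φ ∘ T
    have hφT : HasCompactSupport (φ ∘ T) := hφ2.comp_homeomorph Teq
    have hφT_cont : Continuous (φ ∘ T) := (φS.continuous).comp Teq.continuous
    -- continuity of g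
    obtain ⟨M, hM⟩ := Continuous.bounded_above_of_compact_support φS.continuous hφ2
    set K : Set (EuclideanSpace ℝ (Fin k)) := Prod.fst '' tsupport (φ ∘ T) with hK
    have hKc : IsCompact K := hφT.image continuous_fst
    have hsupp_u : ∀ (u : EuclideanSpace ℝ (Fin k)) (v : EuclideanSpace ℝ (Fin m)), u ∉ K → φ (T (u, v)) = 0 := by
      intro u v hu
      by_contra h
      exact hu ⟨(u, v), subset_tsupport _ (by simpa using h), rfl⟩
    have hg_cont : Continuous g := by
      rw [hg]
      refine continuous_of_dominated (bound := K.indicator fun _ => M) ?_ ?_ ?_ ?_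
      · refine fun v => ((hφT_cont.comp (Continuous.prodMk_left v)).mul
          (Complex.continuous_exp.comp (Continuous.mul ?_ continuous_const))).aestronglyMeasurable
        exact Complex.continuous_ofReal.comp
          (continuous_const.mul (continuous_id.inner continuous_const))
      · intro v
        refine Filter.Eventually.of_forall fun u => ?_
        by_cases hu : u ∈ K
        · simp only [norm_mul]
          have : ‖Complex.exp ((↑(-2 * Real.pi * ⟪u, a⟫) : ℂ) * Complex.I)‖ = 1 := by
            rw [Complex.norm_exp_ofReal_mul_I]
          rw [this, mul_one, Set.indicator_of_mem hu]
          exact hM _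
        · rw [Set.indicator_of_notMem hu, hsupp_u u v hu]
          simp
      · exact (integrable_indicator_iff hKc.isClosed.measurableSet).2
          (integrableOn_const hKc.measure_lt_top.ne)
      · refine Filter.Eventually.of_forall fun u => ?_
        exact (hφT_cont.comp (Continuous.prodMk_right u)).mul continuous_const
    -- compact support of g
    have hg_supp : HasCompactSupport g := by
      refine HasCompactSupport.intro (hφT.image continuous_snd) fun v hv => ?_
      have hz : ∀ u : EuclideanSpace ℝ (Fin k), φ (T (u, v)) = 0 := by
        intro u
        by_contra h
        exact hv ⟨(u, v), subset_tsupport _ (by simpa using h), rfl⟩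
      rw [hg]
      simp only [hz, zero_mul]
      exact integral_zero _ _
    have hg_int : Integrable g volume := hg_cont.integrable_of_hasCompactSupport hg_supp
    -- slice integrability
    have hslice : Integrable (fun c : EuclideanSpace ℝ (Fin m) => ψ (T (a, c))) volume := by
      obtain ⟨Cψ', hCψ'0, hCψ'⟩ := schwartz_decay_bound (V := EuclideanSpace ℝ (Fin n)) ψ (m + 1)
      have hbound : Integrable (fun c : EuclideanSpace ℝ (Fin m) => Cψ' * (1 + ‖c‖) ^ (-((m : ℝ) + 1))) volume := by
        refine (integrable_one_add_norm ?_).const_mul _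
        rw [finrank_euclideanSpace_fin]
        norm_num
      refine hbound.mono'
        ((ψ.continuous.comp (Teq.continuous.comp (Continuous.prodMk_right a))).aestronglyMeasurable)
        (Filter.Eventually.of_forall fun c => ?_)
      have ht : (0 : ℝ) < 1 + ‖c‖ := by positivity
      have h1 : (1 + ‖c‖) ^ (m + 1) ≤ (1 + ‖T (a, c)‖) ^ (m + 1) := by
        apply pow_le_pow_left₀ ht.le
        have := hT_norm (a, c)
        linarith
      have h2 : (1 + ‖c‖) ^ (m + 1) * ‖ψ (T (a, c))‖ ≤ Cψ' := by
        refine le_trans ?_ (hCψ' (T (a, c)))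
        exact mul_le_mul_of_nonneg_right h1 (norm_nonneg _)
      have h3 : ‖ψ (T (a, c))‖ ≤ Cψ' / (1 + ‖c‖) ^ (m + 1) :=
        (le_div_iff₀ (pow_pos ht _)).mpr (by rw [mul_comm]; exact h2)
      rw [Real.rpow_neg ht.le, show ((m : ℝ) + 1) = ((m + 1 : ℕ) : ℝ) by push_cast; ring,
        Real.rpow_natCast]
      exact h3.trans (le_of_eq (div_eq_mul_inv _ _))
    -- the Fourier transform identity
    have hFkey : ∀ c : EuclideanSpace ℝ (Fin m), ψ (T (a, c)) = 𝓕 g c := by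
      intro c
      have hFcont : Continuous (fun p : EuclideanSpace ℝ (Fin k) × EuclideanSpace ℝ (Fin m) =>
          Complex.exp ((↑(-2 * Real.pi * ⟪p.1, a⟫) : ℂ) * Complex.I) *
            Complex.exp ((↑(-2 * Real.pi * ⟪p.2, c⟫) : ℂ) * Complex.I) * φ (T p)) := by
        have c1 : Continuous (fun p : EuclideanSpace ℝ (Fin k) × EuclideanSpace ℝ (Fin m) =>
            Complex.exp ((↑(-2 * Real.pi * ⟪p.1, a⟫) : ℂ) * Complex.I)) := by
          apply Complex.continuous_exp.comp
          apply Continuous.mul _ continuous_const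
          apply Complex.continuous_ofReal.comp
          exact (continuous_const.mul ((continuous_fst.inner continuous_const)))
        have c2 : Continuous (fun p : EuclideanSpace ℝ (Fin k) × EuclideanSpace ℝ (Fin m) =>
            Complex.exp ((↑(-2 * Real.pi * ⟪p.2, c⟫) : ℂ) * Complex.I)) := by
          apply Complex.continuous_exp.comp
          apply Continuous.mul _ continuous_const
          apply Complex.continuous_ofReal.comp
          exact (continuous_const.mul ((continuous_snd.inner continuous_const)))
        exact (c1.mul c2).mul hφT_cont
      have hFint : Integrable (fun p : EuclideanSpace ℝ (Fin k) × EuclideanSpace ℝ (Fin m) =>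
          Complex.exp ((↑(-2 * Real.pi * ⟪p.1, a⟫) : ℂ) * Complex.I) *
            Complex.exp ((↑(-2 * Real.pi * ⟪p.2, c⟫) : ℂ) * Complex.I) * φ (T p))
          (volume.prod volume) :=
        hFcont.integrable_of_hasCompactSupport
          (HasCompactSupport.mul_left (hφ2.comp_homeomorph Teq))
      calc ψ (T (a, c)) = 𝓕 φ (T (a, c)) := hψx _
        _ = ∫ y, Complex.exp ((↑(-2 * Real.pi * ⟪y, T (a, c)⟫) : ℂ) * Complex.I) • φ y :=
            Real.fourier_eq' φ _
        _ = ∫ p : EuclideanSpace ℝ (Fin k) × EuclideanSpace ℝ (Fin m),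
              Complex.exp ((↑(-2 * Real.pi * ⟪T p, T (a, c)⟫) : ℂ) * Complex.I) • φ (T p) :=
            (hTmp.integral_comp Temb _).symm
        _ = ∫ p : EuclideanSpace ℝ (Fin k) × EuclideanSpace ℝ (Fin m),
              Complex.exp ((↑(-2 * Real.pi * ⟪p.1, a⟫) : ℂ) * Complex.I) *
                Complex.exp ((↑(-2 * Real.pi * ⟪p.2, c⟫) : ℂ) * Complex.I) * φ (T p) := by
            refine integral_congr_ae (Filter.Eventually.of_forall fun p => ?_)
            simp only [smul_eq_mul]
            rw [hT_inner p (a, c), ← Complex.exp_add]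
            congr 2
            push_cast
            ring
        _ = ∫ v : EuclideanSpace ℝ (Fin m), ∫ u : EuclideanSpace ℝ (Fin k),
              Complex.exp ((↑(-2 * Real.pi * ⟪u, a⟫) : ℂ) * Complex.I) *
                Complex.exp ((↑(-2 * Real.pi * ⟪v, c⟫) : ℂ) * Complex.I) * φ (T (u, v)) := by
            exact integral_prod_symm _ hFint
        _ = ∫ v : EuclideanSpace ℝ (Fin m),
              Complex.exp ((↑(-2 * Real.pi * ⟪v, c⟫) : ℂ) * Complex.I) • g v := by
            refine integral_congr_ae (Filter.Eventually.of_forall fun v => ?_)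
            simp only [smul_eq_mul]
            rw [show g v = ∫ u : EuclideanSpace ℝ (Fin k),
              φ (T (u, v)) * Complex.exp ((↑(-2 * Real.pi * ⟪u, a⟫) : ℂ) * Complex.I) from rfl,
              ← integral_const_mul]
            refine integral_congr_ae (Filter.Eventually.of_forall fun u => ?_)
            simp only []
            ring
        _ = 𝓕 g c := (Real.fourier_eq' g c).symm
    have h𝓕g_int : Integrable (𝓕 g) volume := by
      have heq : (fun c : EuclideanSpace ℝ (Fin m) => ψ (T (a, c))) = 𝓕 g := funext hFkey
      rw [← heq]
      exact hslice
    have hinv := hg_int.fourierInv_fourier_eq h𝓕g_int (hg_cont.continuousAt (x := 0))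
    have h0 : g 0 = 0 := by
      rw [hg]
      have hz : ∀ u : EuclideanSpace ℝ (Fin k),
          φ (T (u, (0 : EuclideanSpace ℝ (Fin m)))) = 0 := fun u => hφE _ (hmem1 u)
      simp only [hz, zero_mul]
      exact integral_zero _ _
    have hinv0 : (∫ c : EuclideanSpace ℝ (Fin m), 𝓕 g c) = 𝓕⁻ (𝓕 g) 0 := by
      rw [Real.fourierInv_eq']
      refine integral_congr_ae (Filter.Eventually.of_forall fun v => ?_)
      simp
    calc (∫ c : EuclideanSpace ℝ (Fin m), ψ (T (a, c)))
        = ∫ c : EuclideanSpace ℝ (Fin m), 𝓕 g c :=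
          integral_congr_ae (Filter.Eventually.of_forall fun c => hFkey c)
      _ = 𝓕⁻ (𝓕 g) 0 := hinv0
      _ = g 0 := hinv
      _ = 0 := h0
  -- final assembly
  have hG_int : Integrable (fun p : EuclideanSpace ℝ (Fin k) × EuclideanSpace ℝ (Fin m) =>
      θ (T (p.1, 0)) * ψ (T p)) volume := by
    have h1 : Integrable ((fun x => θ x * ψ x) ∘ T) volume :=
      (hTmp.integrable_comp_emb Temb).2 hθψ_int
    refine h1.congr (Filter.Eventually.of_forall fun p => ?_)
    simp only [Function.comp_apply]
    rw [hθT p]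
  calc (∫ x, θ x * (∫ y, φ y * Complex.exp (-2 * Real.pi * ((inner ℝ x y : ℝ) : ℂ) * Complex.I)))
      = ∫ x, θ x * ψ x := by
        refine integral_congr_ae (Filter.Eventually.of_forall fun x => ?_)
        simp only []
        rw [hinner x]
    _ = ∫ p : EuclideanSpace ℝ (Fin k) × EuclideanSpace ℝ (Fin m), θ (T p) * ψ (T p) :=
        (hTmp.integral_comp Temb _).symm
    _ = ∫ p : EuclideanSpace ℝ (Fin k) × EuclideanSpace ℝ (Fin m), θ (T (p.1, 0)) * ψ (T p) :=
        integral_congr_ae (Filter.Eventually.of_forall fun p => by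
          simp only []; rw [hθT p])
    _ = ∫ a : EuclideanSpace ℝ (Fin k), ∫ c : EuclideanSpace ℝ (Fin m),
          θ (T ((a, c).1, 0)) * ψ (T (a, c)) := by
        exact integral_prod _ hG_int
    _ = ∫ a : EuclideanSpace ℝ (Fin k), θ (T (a, 0)) * ∫ c : EuclideanSpace ℝ (Fin m),
          ψ (T (a, c)) := by
        refine integral_congr_ae (Filter.Eventually.of_forall fun a => ?_)
        show (∫ c : EuclideanSpace ℝ (Fin m), θ (T (a, 0)) * ψ (T (a, c)))
          = θ (T (a, 0)) * ∫ c : EuclideanSpace ℝ (Fin m), ψ (T (a, c))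
        exact integral_const_mul _ _
    _ = 0 := by
        refine integral_eq_zero_of_ae (Filter.Eventually.of_forall fun a => ?_)
        show θ (T (a, 0)) * (∫ c : EuclideanSpace ℝ (Fin m), ψ (T (a, c))) = 0
        rw [hkey a, mul_zero]
end
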